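/- arXiv:2312.09344 — 7 statements merged into one kernel-verified Lean document; each statement's English description precedes it below -/
import Mathlib

section
/- Let X₁,…,Xₙ be vectors in ℝ^d and define, for a scalar function f₁ and a vector-valued function f₂ with sample averages denoted by overlines, the matrices T₁ = \overline{X f₂(X)ᵀ}·\overline{f₁(X)} - \overline{X f₁(X)}·\overline{f₂(X)}ᵀ and T₂ = \overline{∇f₂(X)}ᵀ·\overline{f₁(X)} - \overline{∇f₁(X)}·\overline{f₂(X)}ᵀ. Suppose T₂ is invertible and \overline{f₁(X)} ≠ 0, and set Σ̂ = T₁ T₂^{-1}, μ̂ = (\overline{X f₁(X)} - Σ̂ \overline{∇f₁(X)}) / \overline{f₁(X)}. Then (μ̂, Σ̂) satisfies the empirical Stein equations (1/n)Σᵢ [∇f₁(Xᵢ) - Σ̂^{-1}(Xᵢ-μ̂) f₁(Xᵢ)] = 0 and (1/n)Σᵢ [∇f₂(Xᵢ)ᵀ - Σ̂^{-1}(Xᵢ-μ̂) f₂(Xᵢ)ᵀ] = 0, provided Σ̂ is invertible. -/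
/-!
Averaging the two Stein identities turns them into the linear equations
`Σ̂ avg(∇f₁) = avg(X f₁) - avg(f₁) μ̂` and `Σ̂ avg(∇f₂)ᵀ = avg(X f₂ᵀ) - μ̂ avg(f₂)ᵀ`.
The first is the definition of `μ̂`. Substituting it into `Σ̂ T₂ = T₁` and expanding `T₁`, `T₂`
gives `avg(f₁)` times the second, and `avg(f₁) ≠ 0` can be cancelled.
-/

open Matrix Finset

theorem mul_eq_sub_vecMulVec_of_mul_smul_sub_vecMulVec {l m p K : Type*} [Fintype m] [Field K]
    {a : K} (ha : a ≠ 0)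
    {S : Matrix l m K} {J : Matrix m p K} {A : Matrix l p K} {g : m → K} {b u : l → K}
    {v : p → K} (hS : S * (a • J - vecMulVec g v) = a • A - vecMulVec b v)
    (hg : S *ᵥ g = b - a • u) :
    S * J = A - vecMulVec u v := by
  rw [Matrix.mul_sub, Matrix.mul_smul, mul_vecMulVec, hg, sub_vecMulVec, smul_vecMulVec] at hS
  refine smul_right_injective _ ha ?_
  linear_combination (norm := module) hS

theorem mul_sum_mulVec_sub_mul {ι l m R : Type*} [Fintype ι] [Fintype m] [CommRing R]
    (c : R) (X : ι → m → R) (S : Matrix l m R) (mu : m → R) (g : ι → R) (j : l) :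
    c * ∑ i, (S *ᵥ (X i - mu)) j * g i =
      ∑ k, S j k * (c * ∑ i, X i k * g i - mu k * (c * ∑ i, g i)) := by
  simp only [mulVec, dotProduct, Pi.sub_apply, Finset.sum_mul, Finset.mul_sum, mul_sub,
    sub_mul, Finset.sum_sub_distrib]
  congr 1 <;>
  · rw [Finset.sum_comm]
    exact Finset.sum_congr rfl fun k _ => Finset.sum_congr rfl fun i _ => by ring

theorem stmt5_general (d n : ℕ) (X : Fin n → Fin d → ℝ)
    (f₁ : (Fin d → ℝ) → ℝ) (f₂ : (Fin d → ℝ) → Fin d → ℝ)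
    -- sample means
    (af₁ : ℝ) (haf₁ : af₁ = (n : ℝ)⁻¹ * ∑ i, f₁ (X i))
    (af₂ : Fin d → ℝ) (haf₂ : ∀ k, af₂ k = (n : ℝ)⁻¹ * ∑ i, f₂ (X i) k)
    (aXf₁ : Fin d → ℝ) (haXf₁ : ∀ j, aXf₁ j = (n : ℝ)⁻¹ * ∑ i, X i j * f₁ (X i))
    (aXf₂ : Matrix (Fin d) (Fin d) ℝ)
    (haXf₂ : ∀ j k, aXf₂ j k = (n : ℝ)⁻¹ * ∑ i, X i j * f₂ (X i) k)
    (agf₁ : Fin d → ℝ)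
    (hagf₁ : ∀ j, agf₁ j = (n : ℝ)⁻¹ * ∑ i, fderiv ℝ f₁ (X i) (Pi.single j 1))
    (aJf₂ : Matrix (Fin d) (Fin d) ℝ)  -- entry (j,k) = avg ∂ⱼ f₂⁽ᵏ⁾, i.e. avg(∇f₂)ᵀ
    (haJf₂ : ∀ j k, aJf₂ j k = (n : ℝ)⁻¹ * ∑ i, fderiv ℝ f₂ (X i) (Pi.single j 1) k)
    -- the matrices T₁, T₂
    (T₁ T₂ : Matrix (Fin d) (Fin d) ℝ)
    (hT₁ : ∀ j k, T₁ j k = aXf₂ j k * af₁ - aXf₁ j * af₂ k)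
    (hT₂ : ∀ j k, T₂ j k = aJf₂ j k * af₁ - agf₁ j * af₂ k)
    (hT₂inv : IsUnit T₂.det) (haf₁0 : af₁ ≠ 0)
    -- the Stein estimators
    (Sig : Matrix (Fin d) (Fin d) ℝ) (hSig : Sig = T₁ * T₂⁻¹)
    (hSiginv : IsUnit Sig.det)
    (mu : Fin d → ℝ) (hmu : mu = af₁⁻¹ • (aXf₁ - Sig *ᵥ agf₁)) :
    (∀ j, (n : ℝ)⁻¹ * ∑ i, (fderiv ℝ f₁ (X i) (Pi.single j 1) -
        (Sig⁻¹ *ᵥ (X i - mu)) j * f₁ (X i)) = 0) ∧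
    (∀ j k, (n : ℝ)⁻¹ * ∑ i, (fderiv ℝ f₂ (X i) (Pi.single j 1) k -
        (Sig⁻¹ *ᵥ (X i - mu)) j * f₂ (X i) k) = 0) := by
  have hT₁' : T₁ = af₁ • aXf₂ - vecMulVec aXf₁ af₂ := by
    ext j k; simp [hT₁, vecMulVec_apply, mul_comm]
  have hT₂' : T₂ = af₁ • aJf₂ - vecMulVec agf₁ af₂ := by
    ext j k; simp [hT₂, vecMulVec_apply, mul_comm]
  have hSg : Sig *ᵥ agf₁ = aXf₁ - af₁ • mu := by
    rw [hmu, smul_smul, mul_inv_cancel₀ haf₁0, one_smul, sub_sub_cancel]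
  have hSJ : Sig * aJf₂ = aXf₂ - vecMulVec mu af₂ :=
    mul_eq_sub_vecMulVec_of_mul_smul_sub_vecMulVec haf₁0
      (by rw [← hT₁', ← hT₂', hSig, nonsing_inv_mul_cancel_right _ _ hT₂inv]) hSg
  have hg : agf₁ = Sig⁻¹ *ᵥ (aXf₁ - af₁ • mu) := by
    rw [← hSg, mulVec_mulVec, nonsing_inv_mul _ hSiginv, one_mulVec]
  have hJ : aJf₂ = Sig⁻¹ * (aXf₂ - vecMulVec mu af₂) := by
    rw [← hSJ, ← Matrix.mul_assoc, nonsing_inv_mul _ hSiginv, Matrix.one_mul]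
  constructor
  · intro j
    rw [Finset.sum_sub_distrib, mul_sub, mul_sum_mulVec_sub_mul, ← hagf₁, sub_eq_zero, hg]
    simp [mulVec, dotProduct, haXf₁, haf₁, mul_comm]
  · intro j k
    rw [Finset.sum_sub_distrib, mul_sub, mul_sum_mulVec_sub_mul, ← haJf₂, sub_eq_zero, hJ]
    simp [mul_apply, vecMulVec_apply, haXf₂, haf₂]

/-- The explicit Stein-estimator formulas `Σ̂ = T₁ T₂⁻¹`,
`μ̂ = (avg(X f₁) - Σ̂ avg(∇f₁)) / avg(f₁)` solve the empirical Stein equations for the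
truncated multivariate normal model, provided `T₂` and `Σ̂` are invertible and
`avg(f₁) ≠ 0`. -/
theorem stmt5 (d n : ℕ) (hn : 0 < n) (X : Fin n → Fin d → ℝ)
    (f₁ : (Fin d → ℝ) → ℝ) (f₂ : (Fin d → ℝ) → Fin d → ℝ)
    (hf₁ : Differentiable ℝ f₁) (hf₂ : Differentiable ℝ f₂)
    -- sample means
    (af₁ : ℝ) (haf₁ : af₁ = (n : ℝ)⁻¹ * ∑ i, f₁ (X i))
    (af₂ : Fin d → ℝ) (haf₂ : ∀ k, af₂ k = (n : ℝ)⁻¹ * ∑ i, f₂ (X i) k)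
    (aXf₁ : Fin d → ℝ) (haXf₁ : ∀ j, aXf₁ j = (n : ℝ)⁻¹ * ∑ i, X i j * f₁ (X i))
    (aXf₂ : Matrix (Fin d) (Fin d) ℝ)
    (haXf₂ : ∀ j k, aXf₂ j k = (n : ℝ)⁻¹ * ∑ i, X i j * f₂ (X i) k)
    (agf₁ : Fin d → ℝ)
    (hagf₁ : ∀ j, agf₁ j = (n : ℝ)⁻¹ * ∑ i, fderiv ℝ f₁ (X i) (Pi.single j 1))
    (aJf₂ : Matrix (Fin d) (Fin d) ℝ)  -- entry (j,k) = avg ∂ⱼ f₂⁽ᵏ⁾, i.e. avg(∇f₂)ᵀ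
    (haJf₂ : ∀ j k, aJf₂ j k = (n : ℝ)⁻¹ * ∑ i, fderiv ℝ f₂ (X i) (Pi.single j 1) k)
    -- the matrices T₁, T₂
    (T₁ T₂ : Matrix (Fin d) (Fin d) ℝ)
    (hT₁ : ∀ j k, T₁ j k = aXf₂ j k * af₁ - aXf₁ j * af₂ k)
    (hT₂ : ∀ j k, T₂ j k = aJf₂ j k * af₁ - agf₁ j * af₂ k)
    (hT₂inv : IsUnit T₂.det) (haf₁0 : af₁ ≠ 0)
    -- the Stein estimators
    (Sig : Matrix (Fin d) (Fin d) ℝ) (hSig : Sig = T₁ * T₂⁻¹)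
    (hSiginv : IsUnit Sig.det)
    (mu : Fin d → ℝ) (hmu : mu = af₁⁻¹ • (aXf₁ - Sig *ᵥ agf₁)) :
    (∀ j, (n : ℝ)⁻¹ * ∑ i, (fderiv ℝ f₁ (X i) (Pi.single j 1) -
        (Sig⁻¹ *ᵥ (X i - mu)) j * f₁ (X i)) = 0) ∧
    (∀ j k, (n : ℝ)⁻¹ * ∑ i, (fderiv ℝ f₂ (X i) (Pi.single j 1) k -
        (Sig⁻¹ *ᵥ (X i - mu)) j * f₂ (X i) k) = 0) :=
  stmt5_general d n X f₁ f₂ af₁ haf₁ af₂ haf₂ aXf₁ haXf₁ aXf₂ haXf₂ agf₁ hagf₁ aJf₂ haJf₂ T₁ T₂ hT₁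
    hT₂ hT₂inv haf₁0 Sig hSig hSiginv mu hmu
end

section
/- With the notation of the truncated-normal Stein estimator, suppose: (i) the Stein identity E[𝒜_θ₀ f(X)] = 0 holds for f₁, f₂ under θ₀ = (μ₀, Σ₀); (ii) all the moments E[‖X f₂(X)ᵀ‖], E[|f₁(X)|], E[‖X f₁(X)‖], E[‖f₂(X)‖], E[‖∇f₂(X)‖], E[‖∇f₁(X)‖] are finite; (iii) E[∇f₂(X)]ᵀ E[f₁(X)] - E[∇f₁(X)] E[f₂(X)]ᵀ is invertible and E[f₁(X)] ≠ 0. Then for an i.i.d. sample X₁, X₂, … from TN(μ₀, Σ₀), the Stein estimators (Σ̂ₙ, μ̂ₙ) defined by the explicit sample-moment formulas exist for all sufficiently large n almost surely, and (Σ̂ₙ, μ̂ₙ) → (Σ₀, μ₀) almost surely as n → ∞. -/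
/-!
Each sample moment converges almost surely to its expectation by the strong law of large
numbers. Expanding `Σ₀⁻¹ (x - μ₀)` in the Stein identities for `f₁` and for each coordinate of
`f₂` gives `Σ₀ E[∇f₁] = E[X f₁] - E[f₁] μ₀` and `Σ₀ E[∇f₂] = E[X f₂ᵀ] - μ₀ E[f₂]ᵀ`, hence
`Σ₀ M = E[X f₂ᵀ] E[f₁] - E[X f₁] E[f₂]ᵀ`. So the population moments are a point where
`M` and `E[f₁]` are invertible and where the estimator formulas return exactly `(Σ₀, μ₀)`
(symmetrising does not move the symmetric `Σ₀`); continuity of these formulas there concludes.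
-/

open MeasureTheory Real Matrix Filter ProbabilityTheory Finset Topology

theorem ae_tendsto_average_comp_of_measurable {Ω E : Type*} [MeasurableSpace Ω]
    [MeasurableSpace E] {P : Measure Ω} {μ : Measure E} {X : ℕ → Ω → E}
    (hXm : ∀ i, Measurable (X i)) (hXd : ∀ i, P.map (X i) = μ)
    (hXi : Pairwise fun i j => IndepFun (X i) (X j) P)
    {g : E → ℝ} (hg : Measurable g) (hgi : Integrable g μ) :
    ∀ᵐ ω ∂P, Tendsto (fun n : ℕ => (n : ℝ)⁻¹ * ∑ i ∈ range n, g (X i ω)) atTop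
      (𝓝 (∫ x, g x ∂μ)) := by
  have hident : ∀ i, IdentDistrib (g ∘ X i) (g ∘ X 0) P P := fun i =>
    (IdentDistrib.mk (hXm i).aemeasurable (hXm 0).aemeasurable (by rw [hXd i, hXd 0])).comp hg
  have hint : Integrable (g ∘ X 0) P := (hXd 0 ▸ hgi).comp_measurable (hXm 0)
  have hmean : ∫ ω, (g ∘ X 0) ω ∂P = ∫ x, g x ∂μ := by
    rw [← hXd 0, integral_map (hXm 0).aemeasurable (hXd 0 ▸ hg.aestronglyMeasurable)]
    rfl
  filter_upwards [strong_law_ae_real (fun i => g ∘ X i) hint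
    (fun i j hij => (hXi hij).comp hg hg) hident] with ω hω
  rw [← hmean]
  exact hω.congr fun n => div_eq_inv_mul _ _

theorem ae_tendsto_average_comp {Ω E : Type*} [MeasurableSpace Ω] [MeasurableSpace E]
    {P : Measure Ω} {μ : Measure E} {X : ℕ → Ω → E} (hXm : ∀ i, Measurable (X i))
    (hXd : ∀ i, P.map (X i) = μ) (hXi : Pairwise fun i j => IndepFun (X i) (X j) P)
    {g : E → ℝ} (hgi : Integrable g μ) :
    ∀ᵐ ω ∂P, Tendsto (fun n : ℕ => (n : ℝ)⁻¹ * ∑ i ∈ range n, g (X i ω)) atTop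
      (𝓝 (∫ x, g x ∂μ)) := by
  have hg := hgi.aestronglyMeasurable.aemeasurable
  have hcomp : ∀ᵐ ω ∂P, ∀ i, g (X i ω) = hg.mk g (X i ω) :=
    ae_all_iff.2 fun i => ae_eq_comp (hXm i).aemeasurable ((hXd i).symm ▸ hg.ae_eq_mk)
  filter_upwards [hcomp, ae_tendsto_average_comp_of_measurable hXm hXd hXi hg.measurable_mk
    (hgi.congr hg.ae_eq_mk)] with ω hω hlim
  simpa only [hω, integral_congr_ae hg.ae_eq_mk] using hlim

section Stein

variable {κ n : Type*} [Fintype n]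

theorem mulVec_sub_apply_mul {R : Type*} [CommRing R] (A : Matrix κ n R) (x m : n → R) (j : κ)
    (c : R) :
    (A *ᵥ (x - m)) j * c = ∑ l, A j l * (x l * c - m l * c) := by
  simp only [mulVec, dotProduct, Pi.sub_apply, sum_mul]
  exact sum_congr rfl fun l _ => by ring

variable {ν : Measure (n → ℝ)} {f : (n → ℝ) → ℝ}

theorem integrable_mulVec_sub_mul (A : Matrix κ n ℝ) (m : n → ℝ) (hf : Integrable f ν)
    (hxf : ∀ l, Integrable (fun x => x l * f x) ν) (j : κ) :
    Integrable (fun x => (A *ᵥ (x - m)) j * f x) ν := by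
  simp only [mulVec_sub_apply_mul]
  exact integrable_finsetSum _ fun l _ => ((hxf l).sub (hf.const_mul (m l))).const_mul _

theorem integral_mulVec_sub_mul (A : Matrix κ n ℝ) (m : n → ℝ) (hf : Integrable f ν)
    (hxf : ∀ l, Integrable (fun x => x l * f x) ν) (j : κ) :
    ∫ x, (A *ᵥ (x - m)) j * f x ∂ν =
      (A *ᵥ ((fun l => ∫ x, x l * f x ∂ν) - (∫ x, f x ∂ν) • m)) j := by
  simp only [mulVec_sub_apply_mul]
  rw [integral_finsetSum]
  · simp only [integral_const_mul, integral_sub (hxf _) (hf.const_mul _), mulVec, dotProduct,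
      Pi.sub_apply, Pi.smul_apply, smul_eq_mul]
    exact sum_congr rfl fun l _ => by ring
  · exact fun l _ => ((hxf l).sub (hf.const_mul (m l))).const_mul _

variable [DecidableEq n] {S : Matrix n n ℝ} {m : n → ℝ}

theorem mulVec_integral_eq_of_stein (hS : IsUnit S.det) {D : (n → ℝ) → n → ℝ}
    (hf : Integrable f ν) (hxf : ∀ l, Integrable (fun x => x l * f x) ν)
    (hD : ∀ j, Integrable (fun x => D x j) ν)
    (hstein : ∀ j, ∫ x, (D x j - (S⁻¹ *ᵥ (x - m)) j * f x) ∂ν = 0) :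
    S *ᵥ (fun j => ∫ x, D x j ∂ν) = (fun l => ∫ x, x l * f x ∂ν) - (∫ x, f x ∂ν) • m := by
  have hD_eq : (fun j => ∫ x, D x j ∂ν) =
      S⁻¹ *ᵥ ((fun l => ∫ x, x l * f x ∂ν) - (∫ x, f x ∂ν) • m) := by
    funext j
    rw [← integral_mulVec_sub_mul _ _ hf hxf, ← sub_eq_zero, ← hstein j,
      integral_sub (hD j) (integrable_mulVec_sub_mul _ _ hf hxf j)]
  rw [hD_eq, mulVec_mulVec, mul_nonsing_inv _ hS, one_mulVec]

theorem mul_integral_eq_of_stein (hS : IsUnit S.det) {F : (n → ℝ) → n → ℝ}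
    {D : (n → ℝ) → n → n → ℝ} (hF : ∀ k, Integrable (fun x => F x k) ν)
    (hxF : ∀ l k, Integrable (fun x => x l * F x k) ν)
    (hD : ∀ j k, Integrable (fun x => D x j k) ν)
    (hstein : ∀ j k, ∫ x, (D x j k - (S⁻¹ *ᵥ (x - m)) j * F x k) ∂ν = 0) :
    S * of (fun j k => ∫ x, D x j k ∂ν) =
      of (fun l k => ∫ x, x l * F x k ∂ν) - vecMulVec m (fun k => ∫ x, F x k ∂ν) := by
  ext l k
  have hcol := congrFun (mulVec_integral_eq_of_stein hS (hF k) (hxF · k) (hD · k)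
    (hstein · k)) l
  simpa [mul_apply, mulVec, dotProduct, vecMulVec, mul_comm] using hcol

end Stein

theorem mul_eq_of_stein_moments {n R : Type*} [Fintype n] [CommRing R]
    {S G B M : Matrix n n R} {g a c m : n → R} {b : R}
    (hg : S *ᵥ g = a - b • m) (hG : S * G = B - vecMulVec m c)
    (hM : ∀ j k, M j k = G j k * b - g j * c k) :
    S * M = of fun j k => B j k * b - a j * c k := by
  have hM_eq : M = b • G - vecMulVec g c := by
    ext j k
    simp [hM, vecMulVec, mul_comm]
  rw [hM_eq, Matrix.mul_sub, Matrix.mul_smul, hG, mul_vecMulVec, hg]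
  ext j k
  simp only [Matrix.sub_apply, Matrix.smul_apply, vecMulVec_apply, Pi.sub_apply, Pi.smul_apply,
    smul_eq_mul, of_apply]
  ring

section Continuity

variable {ι n : Type*} [Fintype n] {l : Filter ι}

theorem tendsto_inv_smul_sub_mulVec {β : ι → ℝ} {α γ : ι → n → ℝ} {Sₙ : ι → Matrix n n ℝ}
    {b : ℝ} {a g μ : n → ℝ} {S : Matrix n n ℝ} (hβ : Tendsto β l (𝓝 b)) (hb : b ≠ 0)
    (hα : Tendsto α l (𝓝 a)) (hSₙ : Tendsto Sₙ l (𝓝 S)) (hγ : Tendsto γ l (𝓝 g))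
    (hSg : S *ᵥ g = a - b • μ) :
    Tendsto (fun i => (β i)⁻¹ • (α i - Sₙ i *ᵥ γ i)) l (𝓝 μ) := by
  have hmulVec : Tendsto (fun i => Sₙ i *ᵥ γ i) l (𝓝 (S *ᵥ g)) :=
    ((continuous_fst.matrix_mulVec continuous_snd).tendsto (S, g)).comp (hSₙ.prodMk_nhds hγ)
  have hlim := (hβ.inv₀ hb).smul (hα.sub hmulVec)
  rwa [hSg, sub_sub_cancel, smul_smul, inv_mul_cancel₀ hb, one_smul] at hlim

variable [DecidableEq n]

theorem eventually_isUnit_det_of_tendsto {T : ι → Matrix n n ℝ} {M : Matrix n n ℝ}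
    (hT : Tendsto T l (𝓝 M)) (hM : IsUnit M.det) : ∀ᶠ i in l, IsUnit (T i).det := by
  filter_upwards [((continuous_id.matrix_det.tendsto M).comp hT).eventually_ne
    (isUnit_iff_ne_zero.1 hM)] with i hi
  exact isUnit_iff_ne_zero.2 hi

theorem tendsto_symmetrized_mul_inv {T₁ T₂ : ι → Matrix n n ℝ} {S M : Matrix n n ℝ}
    (h₁ : Tendsto T₁ l (𝓝 (S * M))) (h₂ : Tendsto T₂ l (𝓝 M)) (hM : IsUnit M.det)
    (hS : S.IsSymm) :
    Tendsto (fun i => (1 / 2 : ℝ) • (T₁ i * (T₂ i)⁻¹ + (T₁ i * (T₂ i)⁻¹)ᵀ)) l (𝓝 S) := by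
  have hinv_cont : ContinuousAt Ring.inverse M.det := by
    rw [Ring.inverse_eq_inv']
    exact continuousAt_inv₀ (isUnit_iff_ne_zero.1 hM)
  have hprod : Tendsto (fun i => T₁ i * (T₂ i)⁻¹) l (𝓝 S) := by
    simpa only [Function.comp_def, Matrix.mul_assoc, mul_nonsing_inv _ hM, Matrix.mul_one] using
      h₁.mul ((continuousAt_matrix_inv M hinv_cont).tendsto.comp h₂)
  have hsym := (hprod.add ((continuous_id.matrix_transpose.tendsto S).comp hprod)).const_smul
    (1 / 2 : ℝ)
  rwa [Function.id_def, hS.eq, ← two_smul ℝ S, smul_smul, one_div_mul_cancel two_ne_zero,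
    one_smul] at hsym

end Continuity

theorem stmt7_general (d : ℕ) {Ω : Type*} [MeasurableSpace Ω] (P : Measure Ω)
    (μ₀ : Fin d → ℝ) (S₀ : Matrix (Fin d) (Fin d) ℝ) (hS₀ : S₀.PosDef)
    (μTN : Measure (Fin d → ℝ))
    -- i.i.d. sample from TN(μ₀, Σ₀)
    (X : ℕ → Ω → Fin d → ℝ) (hXm : ∀ i, Measurable (X i))
    (hXd : ∀ i, Measure.map (X i) P = μTN)
    (hXi : iIndepFun X P)
    -- test functions
    (f₁ : (Fin d → ℝ) → ℝ) (f₂ : (Fin d → ℝ) → Fin d → ℝ)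
    -- (i) the Stein identities hold under θ₀
    (hstein₁ : ∀ j, ∫ x, (fderiv ℝ f₁ x (Pi.single j 1) -
      (S₀⁻¹ *ᵥ (x - μ₀)) j * f₁ x) ∂μTN = 0)
    (hstein₂ : ∀ j k, ∫ x, (fderiv ℝ f₂ x (Pi.single j 1) k -
      (S₀⁻¹ *ᵥ (x - μ₀)) j * f₂ x k) ∂μTN = 0)
    -- (ii) finiteness of the moments
    (hint₁ : Integrable f₁ μTN)
    (hint₂ : ∀ k, Integrable (fun x => f₂ x k) μTN)
    (hint₃ : ∀ j, Integrable (fun x => x j * f₁ x) μTN)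
    (hint₄ : ∀ j k, Integrable (fun x => x j * f₂ x k) μTN)
    (hint₅ : ∀ j, Integrable (fun x => fderiv ℝ f₁ x (Pi.single j 1)) μTN)
    (hint₆ : ∀ j k, Integrable (fun x => fderiv ℝ f₂ x (Pi.single j 1) k) μTN)
    -- (iii) nondegeneracy
    (M : Matrix (Fin d) (Fin d) ℝ)
    (hM : ∀ j k, M j k =
      (∫ x, fderiv ℝ f₂ x (Pi.single j 1) k ∂μTN) * (∫ x, f₁ x ∂μTN) -
      (∫ x, fderiv ℝ f₁ x (Pi.single j 1) ∂μTN) * (∫ x, f₂ x k ∂μTN))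
    (hMinv : IsUnit M.det) (hEf₁ : (∫ x, f₁ x ∂μTN) ≠ 0)
    -- sample moments and Stein estimators
    (af₁ : ℕ → Ω → ℝ)
    (haf₁ : ∀ n ω, af₁ n ω = (n : ℝ)⁻¹ * ∑ i ∈ Finset.range n, f₁ (X i ω))
    (af₂ : ℕ → Ω → Fin d → ℝ)
    (haf₂ : ∀ n ω k, af₂ n ω k = (n : ℝ)⁻¹ * ∑ i ∈ Finset.range n, f₂ (X i ω) k)
    (aXf₁ : ℕ → Ω → Fin d → ℝ)
    (haXf₁ : ∀ n ω j, aXf₁ n ω j = (n : ℝ)⁻¹ * ∑ i ∈ Finset.range n, X i ω j * f₁ (X i ω))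
    (aXf₂ : ℕ → Ω → Matrix (Fin d) (Fin d) ℝ)
    (haXf₂ : ∀ n ω j k, aXf₂ n ω j k =
      (n : ℝ)⁻¹ * ∑ i ∈ Finset.range n, X i ω j * f₂ (X i ω) k)
    (agf₁ : ℕ → Ω → Fin d → ℝ)
    (hagf₁ : ∀ n ω j, agf₁ n ω j =
      (n : ℝ)⁻¹ * ∑ i ∈ Finset.range n, fderiv ℝ f₁ (X i ω) (Pi.single j 1))
    (aJf₂ : ℕ → Ω → Matrix (Fin d) (Fin d) ℝ)
    (haJf₂ : ∀ n ω j k, aJf₂ n ω j k =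
      (n : ℝ)⁻¹ * ∑ i ∈ Finset.range n, fderiv ℝ f₂ (X i ω) (Pi.single j 1) k)
    (T₁ T₂ : ℕ → Ω → Matrix (Fin d) (Fin d) ℝ)
    (hT₁ : ∀ n ω j k, T₁ n ω j k = aXf₂ n ω j k * af₁ n ω - aXf₁ n ω j * af₂ n ω k)
    (hT₂ : ∀ n ω j k, T₂ n ω j k = aJf₂ n ω j k * af₁ n ω - agf₁ n ω j * af₂ n ω k)
    (Sig : ℕ → Ω → Matrix (Fin d) (Fin d) ℝ)
    (hSig : ∀ n ω, Sig n ω = (1 / 2 : ℝ) •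
      (T₁ n ω * (T₂ n ω)⁻¹ + (T₁ n ω * (T₂ n ω)⁻¹)ᵀ))
    (mu : ℕ → Ω → Fin d → ℝ)
    (hmu : ∀ n ω, mu n ω = (af₁ n ω)⁻¹ • (aXf₁ n ω - Sig n ω *ᵥ agf₁ n ω)) :
    ∀ᵐ ω ∂P,
      (∀ᶠ n in atTop, IsUnit (T₂ n ω).det ∧ af₁ n ω ≠ 0) ∧
      Tendsto (fun n => (Sig n ω, mu n ω)) atTop (nhds (S₀, μ₀)) := by
  have hS₀det : IsUnit S₀.det := isUnit_iff_ne_zero.2 hS₀.det_pos.ne'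
  have hg₁ := mulVec_integral_eq_of_stein hS₀det hint₁ hint₃ hint₅ hstein₁
  have hSM := mul_eq_of_stein_moments hg₁
    (mul_integral_eq_of_stein hS₀det hint₂ hint₄ hint₆ hstein₂) hM
  have slln {g : (Fin d → ℝ) → ℝ} (hgi : Integrable g μTN) :=
    ae_tendsto_average_comp hXm hXd (fun i j hij => hXi.indepFun hij) hgi
  filter_upwards [slln hint₁, ae_all_iff.2 fun k => slln (hint₂ k),
    ae_all_iff.2 fun j => slln (hint₃ j),
    ae_all_iff.2 fun j => ae_all_iff.2 fun k => slln (hint₄ j k),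
    ae_all_iff.2 fun j => slln (hint₅ j),
    ae_all_iff.2 fun j => ae_all_iff.2 fun k => slln (hint₆ j k)] with ω h₁ h₂ h₃ h₄ h₅ h₆
  have hT₁lim : Tendsto (T₁ · ω) atTop (𝓝 (S₀ * M)) :=
    tendsto_pi_nhds.2 fun j => tendsto_pi_nhds.2 fun k => by
      simpa only [hT₁, haXf₂, haf₁, haXf₁, haf₂, hSM, of_apply] using
        ((h₄ j k).mul h₁).sub ((h₃ j).mul (h₂ k))
  have hT₂lim : Tendsto (T₂ · ω) atTop (𝓝 M) :=
    tendsto_pi_nhds.2 fun j => tendsto_pi_nhds.2 fun k => by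
      simpa only [hT₂, haJf₂, haf₁, hagf₁, haf₂, hM] using
        ((h₆ j k).mul h₁).sub ((h₅ j).mul (h₂ k))
  have hSiglim : Tendsto (Sig · ω) atTop (𝓝 S₀) := by
    simpa only [hSig] using tendsto_symmetrized_mul_inv hT₁lim hT₂lim hMinv
      (isHermitian_iff_isSymm.1 hS₀.isHermitian)
  have haf₁lim : Tendsto (af₁ · ω) atTop (𝓝 (∫ x, f₁ x ∂μTN)) := by simpa only [haf₁] using h₁
  refine ⟨(eventually_isUnit_det_of_tendsto hT₂lim hMinv).and (haf₁lim.eventually_ne hEf₁),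
    hSiglim.prodMk_nhds ?_⟩
  simpa only [hmu] using tendsto_inv_smul_sub_mulVec haf₁lim hEf₁
    (tendsto_pi_nhds.2 fun j => by simpa only [haXf₁] using h₃ j) hSiglim
    (tendsto_pi_nhds.2 fun j => by simpa only [hagf₁] using h₅ j) hg₁

/-- Strong consistency of the Stein estimators for the truncated multivariate normal:
under the Stein identity, finiteness of the relevant moments, invertibility of `M` and
`E[f₁(X)] ≠ 0`, for an i.i.d. sample from `TN(μ₀, Σ₀)` the estimators `(Σ̂ₙ, μ̂ₙ)` exist
for all sufficiently large `n` almost surely, and converge almost surely to `(Σ₀, μ₀)`. -/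
theorem stmt7 (d : ℕ) {Ω : Type*} [MeasurableSpace Ω] (P : Measure Ω)
    [IsProbabilityMeasure P]
    (K : Set (Fin d → ℝ)) (hKm : MeasurableSet K)
    (μ₀ : Fin d → ℝ) (S₀ : Matrix (Fin d) (Fin d) ℝ) (hS₀ : S₀.PosDef)
    (C : ℝ)
    (hC : C = ∫ x in K, Real.exp (-(1 / 2) * dotProduct (x - μ₀) (S₀⁻¹ *ᵥ (x - μ₀))))
    (p : (Fin d → ℝ) → ℝ)
    (hp : ∀ x, p x = C⁻¹ * Real.exp (-(1 / 2) * dotProduct (x - μ₀) (S₀⁻¹ *ᵥ (x - μ₀))))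
    (μTN : Measure (Fin d → ℝ))
    (hμTN : μTN = (volume.restrict K).withDensity (fun x => ENNReal.ofReal (p x)))
    -- i.i.d. sample from TN(μ₀, Σ₀)
    (X : ℕ → Ω → Fin d → ℝ) (hXm : ∀ i, Measurable (X i))
    (hXd : ∀ i, Measure.map (X i) P = μTN)
    (hXi : iIndepFun X P)
    -- test functions
    (f₁ : (Fin d → ℝ) → ℝ) (f₂ : (Fin d → ℝ) → Fin d → ℝ)
    (hf₁ : Differentiable ℝ f₁) (hf₂ : Differentiable ℝ f₂)
    -- (i) the Stein identities hold under θ₀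
    (hstein₁ : ∀ j, ∫ x, (fderiv ℝ f₁ x (Pi.single j 1) -
      (S₀⁻¹ *ᵥ (x - μ₀)) j * f₁ x) ∂μTN = 0)
    (hstein₂ : ∀ j k, ∫ x, (fderiv ℝ f₂ x (Pi.single j 1) k -
      (S₀⁻¹ *ᵥ (x - μ₀)) j * f₂ x k) ∂μTN = 0)
    -- (ii) finiteness of the moments
    (hint₁ : Integrable f₁ μTN)
    (hint₂ : ∀ k, Integrable (fun x => f₂ x k) μTN)
    (hint₃ : ∀ j, Integrable (fun x => x j * f₁ x) μTN)
    (hint₄ : ∀ j k, Integrable (fun x => x j * f₂ x k) μTN)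
    (hint₅ : ∀ j, Integrable (fun x => fderiv ℝ f₁ x (Pi.single j 1)) μTN)
    (hint₆ : ∀ j k, Integrable (fun x => fderiv ℝ f₂ x (Pi.single j 1) k) μTN)
    -- (iii) nondegeneracy
    (M : Matrix (Fin d) (Fin d) ℝ)
    (hM : ∀ j k, M j k =
      (∫ x, fderiv ℝ f₂ x (Pi.single j 1) k ∂μTN) * (∫ x, f₁ x ∂μTN) -
      (∫ x, fderiv ℝ f₁ x (Pi.single j 1) ∂μTN) * (∫ x, f₂ x k ∂μTN))
    (hMinv : IsUnit M.det) (hEf₁ : (∫ x, f₁ x ∂μTN) ≠ 0)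
    -- sample moments and Stein estimators
    (af₁ : ℕ → Ω → ℝ)
    (haf₁ : ∀ n ω, af₁ n ω = (n : ℝ)⁻¹ * ∑ i ∈ Finset.range n, f₁ (X i ω))
    (af₂ : ℕ → Ω → Fin d → ℝ)
    (haf₂ : ∀ n ω k, af₂ n ω k = (n : ℝ)⁻¹ * ∑ i ∈ Finset.range n, f₂ (X i ω) k)
    (aXf₁ : ℕ → Ω → Fin d → ℝ)
    (haXf₁ : ∀ n ω j, aXf₁ n ω j = (n : ℝ)⁻¹ * ∑ i ∈ Finset.range n, X i ω j * f₁ (X i ω))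
    (aXf₂ : ℕ → Ω → Matrix (Fin d) (Fin d) ℝ)
    (haXf₂ : ∀ n ω j k, aXf₂ n ω j k =
      (n : ℝ)⁻¹ * ∑ i ∈ Finset.range n, X i ω j * f₂ (X i ω) k)
    (agf₁ : ℕ → Ω → Fin d → ℝ)
    (hagf₁ : ∀ n ω j, agf₁ n ω j =
      (n : ℝ)⁻¹ * ∑ i ∈ Finset.range n, fderiv ℝ f₁ (X i ω) (Pi.single j 1))
    (aJf₂ : ℕ → Ω → Matrix (Fin d) (Fin d) ℝ)
    (haJf₂ : ∀ n ω j k, aJf₂ n ω j k =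
      (n : ℝ)⁻¹ * ∑ i ∈ Finset.range n, fderiv ℝ f₂ (X i ω) (Pi.single j 1) k)
    (T₁ T₂ : ℕ → Ω → Matrix (Fin d) (Fin d) ℝ)
    (hT₁ : ∀ n ω j k, T₁ n ω j k = aXf₂ n ω j k * af₁ n ω - aXf₁ n ω j * af₂ n ω k)
    (hT₂ : ∀ n ω j k, T₂ n ω j k = aJf₂ n ω j k * af₁ n ω - agf₁ n ω j * af₂ n ω k)
    (Sig : ℕ → Ω → Matrix (Fin d) (Fin d) ℝ)
    (hSig : ∀ n ω, Sig n ω = (1 / 2 : ℝ) •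
      (T₁ n ω * (T₂ n ω)⁻¹ + (T₁ n ω * (T₂ n ω)⁻¹)ᵀ))
    (mu : ℕ → Ω → Fin d → ℝ)
    (hmu : ∀ n ω, mu n ω = (af₁ n ω)⁻¹ • (aXf₁ n ω - Sig n ω *ᵥ agf₁ n ω)) :
    ∀ᵐ ω ∂P,
      (∀ᶠ n in atTop, IsUnit (T₂ n ω).det ∧ af₁ n ω ≠ 0) ∧
      Tendsto (fun n => (Sig n ω, mu n ω)) atTop (nhds (S₀, μ₀)) :=
  stmt7_general d P μ₀ S₀ hS₀ μTN X hXm hXd hXi f₁ f₂ hstein₁ hstein₂ hint₁ hint₂ hint₃ hint₄ hint₅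
    hint₆ M hM hMinv hEf₁ af₁ haf₁ af₂ haf₂ aXf₁ haXf₁ aXf₂ haXf₂ agf₁ hagf₁ aJf₂ haJf₂ T₁ T₂ hT₁
    hT₂ Sig hSig mu hmu
end

section
/- Let K ⊂ ℝ^d be a bounded open set with smooth boundary contained in a product of open intervals (a,b) = (a₁,b₁)×…×(a_d,b_d), and let p_θ(x) = C(θ)^{-1} ∏ᵢ pᵢ(xᵢ) be a truncated product density where each pᵢ is smooth and positive on (aᵢ,bᵢ). Let τ : cl(K) → ℝ and f : cl(K) → ℝ be smooth on int(K), continuous on cl(K), with f = 0 on ∂K ∖ ∂(a,b), f·p_θ·τ·‖x‖^{d-1} → 0 as x approaches ∂K ∩ ∂(a,b) or as ‖x‖ → ∞, and ∫_K ‖∇(p_θ τ f)‖ dx < ∞. Then E[∇(p_θ(X) τ(X) f(X)) / p_θ(X)] = 0 for X with density p_θ. -/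
open MeasureTheory Real Filter Set

lemma oneDim (O : Set ℝ) (hO : IsOpen O) (hOb : Bornology.IsBounded O)
    (h h' : ℝ → ℝ) (hd : ∀ t ∈ O, HasDerivAt h (h' t) t)
    (hi : IntegrableOn h' O)
    (hfr : ∀ c ∈ frontier O, Tendsto h (nhdsWithin c O) (nhds 0)) :
    ∫ t in O, h' t = 0 := by
  classical
  -- the set of connected components
  set S : Set (Set ℝ) := {s | ∃ x ∈ O, s = connectedComponentIn O x} with hS
  -- basic facts about members of S
  have hSsub : ∀ s ∈ S, s ⊆ O := by
    rintro s ⟨x, hx, rfl⟩; exact connectedComponentIn_subset O x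
  have hSopen : ∀ s ∈ S, IsOpen s := by rintro s ⟨x, hx, rfl⟩; exact hO.connectedComponentIn
  have hSne : ∀ s ∈ S, s.Nonempty := by
    rintro s ⟨x, hx, rfl⟩; exact ⟨x, mem_connectedComponentIn hx⟩
  have hSdisj : ∀ s ∈ S, ∀ t ∈ S, s ≠ t → Disjoint s t := by
    rintro s ⟨x, hx, rfl⟩ t ⟨y, hy, rfl⟩ hne
    rw [Set.disjoint_left]
    intro z hzs hzt
    exact hne ((connectedComponentIn_eq hzs).trans (connectedComponentIn_eq hzt).symm)
  -- each member of S is an open interval Ioo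
  have hIoo : ∀ s ∈ S, ∃ c e : ℝ, c < e ∧ s = Ioo c e ∧ c ∈ frontier O ∧ e ∈ frontier O := by
    rintro s hs
    obtain ⟨x, hx, rfl⟩ := hs
    set s := connectedComponentIn O x with hsdef
    have hsub : s ⊆ O := connectedComponentIn_subset O x
    have hop : IsOpen s := hO.connectedComponentIn
    have hxs : x ∈ s := mem_connectedComponentIn hx
    have hbdd : Bornology.IsBounded s := hOb.subset hsub
    have hbb : BddBelow s := hbdd.bddBelow
    have hba : BddAbove s := hbdd.bddAbove
    have hoc : OrdConnected s := isPreconnected_connectedComponentIn.ordConnected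
    set c := sInf s with hc
    set e := sSup s with he
    -- every point of s is strictly between c and e
    have hstrict : ∀ t ∈ s, c < t ∧ t < e := by
      intro t hts
      obtain ⟨ε, hε, hball⟩ := Metric.isOpen_iff.1 hop t hts
      have h1 : t - ε / 2 ∈ s := hball (by
        rw [Metric.mem_ball, Real.dist_eq, show t - ε / 2 - t = -(ε/2) by ring, abs_neg,
          abs_of_pos (by linarith)]; linarith)
      have h2 : t + ε / 2 ∈ s := hball (by
        rw [Metric.mem_ball, Real.dist_eq, show t + ε / 2 - t = ε/2 by ring,
          abs_of_pos (by linarith)]; linarith)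
      exact ⟨lt_of_le_of_lt (csInf_le hbb h1) (by linarith), lt_of_lt_of_le (by linarith) (le_csSup hba h2)⟩
    have hce : c < e := (hstrict x hxs).1.trans (hstrict x hxs).2
    have hseq : s = Ioo c e := by
      apply Subset.antisymm
      · intro t ht; exact hstrict t ht
      · intro t ht
        obtain ⟨u, hu, hut⟩ := exists_lt_of_csInf_lt ⟨x, hxs⟩ ht.1
        obtain ⟨v, hv, htv⟩ := exists_lt_of_lt_csSup ⟨x, hxs⟩ ht.2
        exact hoc.out hu hv ⟨hut.le, htv.le⟩
    -- endpoints are in the frontier of O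
    have hnotmem : ∀ w : ℝ, w ∉ Ioo c e → w ∈ closure s → w ∉ O := by
      intro w hw hwc hwO
      have hws : w ∈ connectedComponentIn O w := mem_connectedComponentIn hwO
      -- connectedComponentIn O w is open, so it contains a ball around w, which meets s
      have hop' : IsOpen (connectedComponentIn O w) := hO.connectedComponentIn
      obtain ⟨ε, hε, hball⟩ := Metric.isOpen_iff.1 hop' w hws
      obtain ⟨z, hz⟩ := Metric.mem_closure_iff.1 hwc ε hε
      have hz1 : z ∈ connectedComponentIn O w := hball (by rw [Metric.mem_ball, dist_comm]; exact hz.2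
        )
      have : connectedComponentIn O w = s := by
        rw [connectedComponentIn_eq hz1, hsdef]
        exact (connectedComponentIn_eq hz.1).symm
      rw [this] at hws
      rw [hseq] at hws
      exact hw hws
    have hcl : closure s = Icc c e := by rw [hseq, closure_Ioo hce.ne]
    have hcf : c ∈ frontier O := by
      rw [frontier, hO.interior_eq]
      exact ⟨closure_mono hsub (hcl ▸ Set.mem_Icc.2 ⟨le_refl c, hce.le⟩),
        hnotmem c (fun hh => lt_irrefl c hh.1) (hcl ▸ Set.mem_Icc.2 ⟨le_refl c, hce.le⟩)⟩
    have hef : e ∈ frontier O := by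
      rw [frontier, hO.interior_eq]
      exact ⟨closure_mono hsub (hcl ▸ Set.mem_Icc.2 ⟨hce.le, le_refl e⟩),
        hnotmem e (fun hh => lt_irrefl e hh.2) (hcl ▸ Set.mem_Icc.2 ⟨hce.le, le_refl e⟩)⟩
    exact ⟨c, e, hce, hseq, hcf, hef⟩
  -- S is countable
  have hScnt : S.Countable := by
    have hsel : ∀ s : S, ∃ r : ℚ, (r : ℝ) ∈ (s : Set ℝ) := by
      rintro ⟨s, hs⟩
      obtain ⟨c, e, hce, hseq, -, -⟩ := hIoo s hs
      obtain ⟨r, hr⟩ := exists_rat_btwn hce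
      refine ⟨r, ?_⟩
      show (r : ℝ) ∈ s
      rw [hseq]; exact hr
    choose r hr using hsel
    have hinj : Function.Injective r := by
      intro s t hst
      by_contra hne
      have hd' : Disjoint (s : Set ℝ) (t : Set ℝ) :=
        hSdisj s s.2 t t.2 (fun hh => hne (Subtype.ext hh))
      exact (Set.disjoint_left.1 hd') (hr s) (hst ▸ hr t)
    rw [← Set.countable_coe_iff]
    exact hinj.countable
  haveI : Countable S := hScnt.to_subtype
  -- O is the union of its components
  have hOun : O = ⋃ s : S, (s : Set ℝ) := by
    ext x
    constructor
    · intro hx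
      exact Set.mem_iUnion.2 ⟨⟨connectedComponentIn O x, ⟨x, hx, rfl⟩⟩, mem_connectedComponentIn hx⟩
    · intro hx
      obtain ⟨s, hxs⟩ := Set.mem_iUnion.1 hx
      exact hSsub s s.2 hxs
  have hi' : IntegrableOn h' (⋃ s : S, (s : Set ℝ)) := by rwa [← hOun]
  rw [hOun, integral_iUnion (s := fun s : ↥S => (s : Set ℝ))
    (fun s => (hSopen s s.2).measurableSet)
    (fun s t hst => hSdisj s s.2 t t.2 (fun hh => hst (Subtype.ext hh))) hi']
  -- each component integrates to zero
  have : ∀ s : S, ∫ t in (s : Set ℝ), h' t = 0 := by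
    rintro s
    obtain ⟨c, e, hce, hseq, hcf, hef⟩ := hIoo s s.2
    rw [hseq]
    have hii : IntervalIntegrable h' volume c e := by
      rw [intervalIntegrable_iff_integrableOn_Ioo_of_le hce.le]
      exact hi.mono_set (hseq ▸ hSsub s s.2)
    have hderiv : ∀ t ∈ Ioo c e, HasDerivAt h (h' t) t := fun t ht =>
      hd t (hseq ▸ hSsub s s.2 <| ht)
    have hta : Tendsto h (nhdsWithin c (Set.Ioi c)) (nhds 0) := by
      rw [← nhdsWithin_Ioo_eq_nhdsGT hce]
      exact (hfr c hcf).mono_left (nhdsWithin_mono _ (hseq ▸ hSsub s s.2))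
    have htb : Tendsto h (nhdsWithin e (Set.Iio e)) (nhds 0) := by
      rw [← nhdsWithin_Ioo_eq_nhdsLT hce]
      exact (hfr e hef).mono_left (nhdsWithin_mono _ (hseq ▸ hSsub s s.2))
    have := intervalIntegral.integral_eq_sub_of_hasDerivAt_of_tendsto hce hderiv hii hta htb
    rw [sub_zero] at this
    rw [← integral_Ioc_eq_integral_Ioo, ← intervalIntegral.integral_of_le hce.le, this]
  simp [this]



/-- Stein identity for a truncated product of independent univariate distributions, with
weight function `τ`: `E[∇(p_θ τ f)(X) / p_θ(X)] = 0` componentwise, for `f` vanishing on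
the part of `∂K` inside the box `(a,b)` and `f p_θ τ ‖x‖^{d-1}` tending to `0` at
`∂K ∩ ∂(a,b)`. -/
theorem stmt10 (d : ℕ) (a b : Fin d → ℝ) (hab : ∀ i, a i < b i)
    (B : Set (Fin d → ℝ)) (hB : B = Set.pi Set.univ fun i => Set.Ioo (a i) (b i))
    (K : Set (Fin d → ℝ)) (hK : IsOpen K) (hKb : Bornology.IsBounded K) (hKB : K ⊆ B)
    -- smooth boundary of K, encoded by a smooth defining function
    (φ : (Fin d → ℝ) → ℝ) (hφ : ContDiff ℝ (⊤ : ℕ∞) φ)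
    (hKφ : K = {x | φ x < 0}) (hbd : frontier K = {x | φ x = 0})
    (hreg : ∀ x ∈ frontier K, fderiv ℝ φ x ≠ 0)
    -- the marginal densities
    (q : Fin d → ℝ → ℝ) (hq : ∀ i, ContDiffOn ℝ (⊤ : ℕ∞) (q i) (Set.Ioo (a i) (b i)))
    (hqpos : ∀ i, ∀ t ∈ Set.Ioo (a i) (b i), 0 < q i t)
    (C : ℝ) (hC : C = ∫ x in K, ∏ i, q i (x i))
    (p : (Fin d → ℝ) → ℝ) (hp : ∀ x, p x = C⁻¹ * ∏ i, q i (x i))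
    -- the weight and test functions
    (τ f : (Fin d → ℝ) → ℝ)
    (hτ : ContDiffOn ℝ (⊤ : ℕ∞) τ (interior K)) (hτc : ContinuousOn τ (closure K))
    (hf : ContDiffOn ℝ (⊤ : ℕ∞) f (interior K)) (hfc : ContinuousOn f (closure K))
    (hf0 : ∀ x ∈ frontier K \ frontier B, f x = 0)
    (hdecay : ∀ y ∈ frontier K ∩ frontier B,
      Tendsto (fun x => f x * p x * τ x * ‖x‖ ^ (d - 1)) (nhdsWithin y K) (nhds 0))
    (hint : IntegrableOn (fun x => ‖fderiv ℝ (fun y => p y * τ y * f y) x‖) K) :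
    ∀ i, ∫ x in K,
      (fderiv ℝ (fun y => p y * τ y * f y) x (Pi.single i 1) / p x) * p x = 0 := by
  intro i
  classical
  set g : (Fin d → ℝ) → ℝ := fun y => p y * τ y * f y with hg
  by_cases hC0 : C = 0
  · have hp0 : ∀ x, p x = 0 := fun x => by rw [hp, hC0, inv_zero, zero_mul]
    simp only [hp0, mul_zero, integral_zero]
  -- C ≠ 0 : reduce to ∫ fderiv = 0
  have hBo : IsOpen B := by
    rw [hB]; exact isOpen_set_pi finite_univ (fun j _ => isOpen_Ioo)
  have hmemB : ∀ x ∈ B, ∀ j, x j ∈ Set.Ioo (a j) (b j) := by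
    intro x hx j; rw [hB] at hx; exact hx j (Set.mem_univ j)
  have hpne : ∀ x ∈ K, p x ≠ 0 := by
    intro x hx
    rw [hp]
    exact mul_ne_zero (inv_ne_zero hC0)
      (Finset.prod_ne_zero_iff.2 fun j _ => (hqpos j (x j) (hmemB x (hKB hx) j)).ne')
  have hred : ∫ x in K, (fderiv ℝ g x (Pi.single i 1) / p x) * p x
      = ∫ x in K, fderiv ℝ g x (Pi.single i 1) := by
    refine setIntegral_congr_ae hK.measurableSet (Eventually.of_forall fun x hx => ?_)
    rw [div_mul_cancel₀ _ (hpne x hx)]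
  rw [hred]
  -- continuity and differentiability of p on B
  have hpc : ContinuousOn p B := by
    have : p = fun x => C⁻¹ * ∏ j, q j (x j) := funext hp
    rw [this]
    refine continuousOn_const.mul (continuousOn_finset_prod _ fun j _ => ?_)
    exact (hq j).continuousOn.comp (continuous_apply j).continuousOn
      (fun x hx => hmemB x hx j)
  have hpd : ∀ x ∈ B, DifferentiableAt ℝ p x := by
    intro x hx
    have : p = fun x => C⁻¹ * ∏ j, q j (x j) := funext hp
    rw [this]
    have hfac : ∀ j : Fin d, DifferentiableAt ℝ (fun x : Fin d → ℝ => q j (x j)) x := by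
      intro j
      exact DifferentiableAt.comp x
        (((hq j).contDiffAt (isOpen_Ioo.mem_nhds (hmemB x hx j))).differentiableAt (by simp))
        ((ContinuousLinearMap.proj j : (Fin d → ℝ) →L[ℝ] ℝ).differentiableAt)
    have hprod : DifferentiableAt ℝ (fun x : Fin d → ℝ => ∏ j, q j (x j)) x :=
      (HasFDerivAt.finset_prod (fun j _ => (hfac j).hasFDerivAt)).differentiableAt
    exact hprod.const_mul _
  have hτ' : ContDiffOn ℝ (⊤ : ℕ∞) τ K := by rwa [hK.interior_eq] at hτ
  have hf' : ContDiffOn ℝ (⊤ : ℕ∞) f K := by rwa [hK.interior_eq] at hf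
  have hgdiff : ∀ x ∈ K, DifferentiableAt ℝ g x := by
    intro x hx
    have hτd := ((hτ'.contDiffAt (hK.mem_nhds hx)).differentiableAt (by simp))
    have hfd := ((hf'.contDiffAt (hK.mem_nhds hx)).differentiableAt (by simp))
    exact ((hpd x (hKB hx)).mul hτd).mul hfd
  -- now the divergence part; split on d
  clear hred hp hC hτ hf hφ hKφ hbd hreg hq hqpos hpne hab
  cases d with
  | zero => exact i.elim0
  | succ n =>
  set F : (Fin (n+1) → ℝ) → ℝ := fun x => fderiv ℝ g x (Pi.single i 1) with hF
  set G : (Fin (n+1) → ℝ) → ℝ := K.indicator F with hG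
  have hFm : Measurable F := by
    rw [hF]
    exact measurable_fderiv_apply_const (𝕜 := ℝ) (f := g) (Pi.single i 1)
  have hGint : Integrable G := by
    rw [hG, integrable_indicator_iff hK.measurableSet]
    refine hint.mono' hFm.aestronglyMeasurable (Eventually.of_forall fun x => ?_)
    have h1 : ‖F x‖ ≤ ‖fderiv ℝ g x‖ * ‖(Pi.single i 1 : Fin (n+1) → ℝ)‖ :=
      (fderiv ℝ g x).le_opNorm _
    have h2 : ‖(Pi.single i 1 : Fin (n+1) → ℝ)‖ = 1 := by
      rw [Pi.norm_single]; exact norm_one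
    rw [h2, mul_one] at h1
    exact h1
  set e := MeasurableEquiv.piFinSuccAbove (fun _ : Fin (n+1) => ℝ) i with he
  have hmp : MeasurePreserving e.symm :=
    (volume_preserving_piFinSuccAbove (fun _ : Fin (n+1) => ℝ) i).symm e
  have hGe : Integrable (G ∘ e.symm) :=
    (hmp.integrable_comp_emb e.symm.measurableEmbedding).2 hGint
  rw [Measure.volume_eq_prod] at hGe
  set ι : ℝ → (Fin n → ℝ) → (Fin (n+1) → ℝ) :=
    fun t z => Fin.insertNth (α := fun _ => ℝ) i t z with hι
  have hesymm : ∀ (t : ℝ) (z : Fin n → ℝ), e.symm (t, z) = ι t z := by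
    intro t z; rfl
  -- slice structure
  set O : (Fin n → ℝ) → Set ℝ := fun z => (fun t => ι t z) ⁻¹' K with hO
  have hins : ∀ (z : Fin n → ℝ) (t : ℝ),
      HasDerivAt (fun s => ι s z) (Pi.single i 1) t := by
    intro z t
    rw [hι]
    rw [hasDerivAt_pi]
    intro j
    rcases eq_or_ne j i with rfl | hj
    · simp only [Fin.insertNth_apply_same, Pi.single_eq_same]
      exact hasDerivAt_id t
    · obtain ⟨k, rfl⟩ := Fin.exists_succAbove_eq hj
      simp only [Fin.insertNth_apply_succAbove, Pi.single_eq_of_ne (Fin.succAbove_ne i k)]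
      exact hasDerivAt_const t _
  have hcont : ∀ z : Fin n → ℝ, Continuous (fun t => ι t z) := fun z =>
    continuous_iff_continuousAt.2 fun t => (hins z t).continuousAt
  have hOopen : ∀ z, IsOpen (O z) := fun z => hK.preimage (hcont z)
  obtain ⟨R, hR⟩ := hKb.subset_closedBall 0
  have hObd : ∀ z, Bornology.IsBounded (O z) := by
    intro z
    refine (Metric.isBounded_Icc (-R) R).subset (fun t ht => ?_)
    have h1 : ‖ι t z‖ ≤ R := mem_closedBall_zero_iff.1 (hR ht)
    have h2 := norm_le_pi_norm (ι t z) i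
    simp only [hι, Fin.insertNth_apply_same] at h2
    rw [Real.norm_eq_abs] at h2
    exact abs_le.1 (h2.trans h1)
  have hsd : ∀ z, ∀ t ∈ O z,
      HasDerivAt (fun s => g (ι s z)) (F (ι t z)) t := by
    intro z t ht
    have := ((hgdiff _ ht).hasFDerivAt).comp_hasDerivAt t (hins z t)
    exact this
  -- boundary limits
  have hbound : ∀ z : Fin n → ℝ, (n = 0 ∨ z ≠ 0) → ∀ c ∈ frontier (O z),
      Tendsto (fun t => g (ι t z)) (nhdsWithin c (O z)) (nhds 0) := by
    intro z hz c hc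
    set y := ι c z with hy
    have hyK : y ∉ K := by
      have h2 := hc.2
      rw [(hOopen z).interior_eq] at h2
      exact h2
    have hycl : y ∈ closure K := by
      have hsub : closure (O z) ⊆ (fun t => ι t z) ⁻¹' closure K :=
        closure_minimal (fun t ht => subset_closure ht)
          (isClosed_closure.preimage (hcont z))
      exact hsub hc.1
    have hyfr : y ∈ frontier K := by rw [hK.frontier_eq]; exact ⟨hycl, hyK⟩
    have Tι : Tendsto (fun t => ι t z) (nhdsWithin c (O z)) (nhdsWithin y K) :=
      ContinuousWithinAt.tendsto_nhdsWithin ((hcont z).continuousWithinAt)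
        (fun t ht => ht)
    by_cases hyB : y ∈ frontier B
    · have T1 := hdecay y ⟨hyfr, hyB⟩
      simp only [Nat.add_sub_cancel] at T1
      have hpow : ‖y‖ ^ n ≠ 0 := by
        rcases hz with rfl | hz
        · simp
        · obtain ⟨k, hk⟩ := Function.ne_iff.1 hz
          have hy0 : y ≠ 0 := by
            intro h0
            apply hk
            have := congrFun h0 (i.succAbove k)
            simp only [hy, hι, Fin.insertNth_apply_succAbove, Pi.zero_apply] at this
            exact this
          exact pow_ne_zero _ (norm_ne_zero_iff.2 hy0)
      have T2 : Tendsto (fun x : Fin (n+1) → ℝ => ‖x‖ ^ n) (nhdsWithin y K)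
          (nhds (‖y‖ ^ n)) :=
        ((continuous_norm.pow n).tendsto y).mono_left nhdsWithin_le_nhds
      have T3 := T1.div T2 hpow
      rw [zero_div] at T3
      have T4 : Tendsto g (nhdsWithin y K) (nhds 0) := by
        refine T3.congr' ?_
        filter_upwards [T2.eventually_ne hpow] with x hx
        rw [hg]
        show f x * p x * τ x * ‖x‖ ^ n / ‖x‖ ^ n = p x * τ x * f x
        rw [mul_div_assoc, div_self hx, mul_one]
        ring
      exact T4.comp Tι
    · have hfy : f y = 0 := hf0 y ⟨hyfr, hyB⟩
      have hyB' : y ∈ B := by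
        by_contra hyB2
        refine hyB ⟨closure_mono hKB hycl, ?_⟩
        rwa [hBo.interior_eq]
      have Tp : Tendsto p (nhdsWithin y K) (nhds (p y)) :=
        ((hpc.continuousAt (hBo.mem_nhds hyB')).tendsto).mono_left nhdsWithin_le_nhds
      have Tτ : Tendsto τ (nhdsWithin y K) (nhds (τ y)) :=
        (hτc y hycl).mono_left (nhdsWithin_mono _ subset_closure)
      have Tf : Tendsto f (nhdsWithin y K) (nhds (f y)) :=
        (hfc y hycl).mono_left (nhdsWithin_mono _ subset_closure)
      have Tg : Tendsto g (nhdsWithin y K) (nhds 0) := by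
        have := (Tp.mul Tτ).mul Tf
        rwa [hfy, mul_zero] at this
      exact Tg.comp Tι
  -- a.e. inner integral is zero
  have hae : ∀ᵐ z : Fin n → ℝ, (∫ t, G (e.symm (t, z))) = 0 := by
    have h1 : ∀ᵐ z : Fin n → ℝ, Integrable (fun t => G (e.symm (t, z))) :=
      hGe.prod_left_ae
    have h2 : ∀ᵐ z : Fin n → ℝ, (n = 0 ∨ z ≠ 0) := by
      rcases Nat.eq_zero_or_pos n with hn | hn
      · exact Eventually.of_forall fun _ => Or.inl hn
      · haveI : Nonempty (Fin n) := ⟨⟨0, hn⟩⟩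
        have h0 : (volume : Measure (Fin n → ℝ)) {0} = 0 := by
          have hset : ({0} : Set (Fin n → ℝ)) = Set.pi Set.univ (fun _ => ({0} : Set ℝ)) := by
            ext w
            simp [funext_iff, Set.mem_pi]
          rw [hset, volume_pi, Measure.pi_pi]
          simp only [Real.volume_singleton, Finset.prod_const]
          exact zero_pow (by simpa using hn.ne')
        refine (eventually_of_mem (?_) fun z hz => Or.inr hz)
        show {z : Fin n → ℝ | z ≠ 0} ∈ _
        rw [mem_ae_iff]
        convert h0 using 2
        ext w
        show ¬¬(w = 0) ↔ w ∈ ({0} : Set (Fin n → ℝ))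
        rw [not_not, Set.mem_singleton_iff]
    filter_upwards [h1, h2] with z hz1 hz2
    have hrw : (fun t => G (e.symm (t, z)))
        = (O z).indicator (fun t => F (ι t z)) := by
      funext t
      rw [hesymm, hG]
      exact (Set.indicator_comp_right (fun t : ℝ => ι t z) (s := K) (g := F)).symm
    rw [hrw] at hz1 ⊢
    rw [integral_indicator (hOopen z).measurableSet]
    exact oneDim (O z) (hOopen z) (hObd z) _ _ (hsd z)
      ((integrable_indicator_iff (hOopen z).measurableSet).1 hz1) (hbound z hz2)
  -- put everything together
  have step1 : ∫ x in K, F x = ∫ x, G x := (integral_indicator hK.measurableSet).symm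
  have step2 : ∫ x, G x = ∫ y, G (e.symm y) := (hmp.integral_comp' G).symm
  have step3 : ∫ y, G (e.symm y) = ∫ z, ∫ t, G (e.symm (t, z)) := by
    rw [show (volume : Measure (ℝ × (Fin n → ℝ))) = Measure.prod volume volume from
      Measure.volume_eq_prod _ _]
    exact integral_prod_symm _ hGe
  rw [step1, step2, step3]
  exact integral_eq_zero_of_ae hae
end

section
/- Let X = (X⁽¹⁾, X⁽²⁾) have the density proportional to exp(-(x₁-μ)²/(2σ²)) · x₂^{α-1} e^{-β x₂} on a domain K ⊂ ℝ × (0,∞) that is the intersection of an open disc B_r(m) with the upper half-plane, where σ², α, β > 0. Let f : cl(K) → ℝ be smooth on int(K), continuous on cl(K), vanishing on ∂K ∖ {x₂ = 0}, with x₂(x₂^{α-1}e^{-βx₂}e^{-(x₁-μ)²/(2σ²)}) f(x) → 0 as x₂ → 0 and ∫_K of the norm of the relevant gradient finite. Then E[ X⁽²⁾(μ - X⁽¹⁾)/σ² · f(X) + X⁽²⁾ ∂f/∂x₁(X) ] = 0 and E[ (α - β X⁽²⁾) f(X) + X⁽²⁾ ∂f/∂x₂(X) ] = 0. -/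
open MeasureTheory Real Filter Set

/-- Auxiliary: derivative of `ρ y * y.2 * f y` at a point with positive second
coordinate, with its evaluations at the basis vectors. -/
lemma stein_aux (μ σ2 α β : ℝ) (hσ2 : 0 < σ2) (ρ : ℝ × ℝ → ℝ)
    (hρ : ∀ x, ρ x = Real.exp (-(x.1 - μ) ^ 2 / (2 * σ2)) *
      (x.2 ^ (α - 1) * Real.exp (-β * x.2)))
    (f : ℝ × ℝ → ℝ) (x : ℝ × ℝ) (hx2 : 0 < x.2) (hfd : DifferentiableAt ℝ f x) :
    ∃ L : ℝ × ℝ →L[ℝ] ℝ, HasFDerivAt (fun y => ρ y * y.2 * f y) L x ∧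
      L (1, 0) = (x.2 * (μ - x.1) / σ2 * f x + x.2 * fderiv ℝ f x (1, 0)) * ρ x ∧
      L (0, 1) = ((α - β * x.2) * f x + x.2 * fderiv ℝ f x (0, 1)) * ρ x := by
  have hAd : HasDerivAt (fun t : ℝ => Real.exp (-(t - μ) ^ 2 / (2 * σ2)))
      (Real.exp (-(x.1 - μ) ^ 2 / (2 * σ2)) * (-(x.1 - μ) / σ2)) x.1 := by
    have h1 : HasDerivAt (fun t : ℝ => -(t - μ) ^ 2 / (2 * σ2)) (-(x.1 - μ) / σ2) x.1 := by
      have h0 : HasDerivAt (fun t : ℝ => t - μ) 1 x.1 := (hasDerivAt_id _).sub_const μ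
      have h2 := ((h0.pow 2).neg).div_const (2 * σ2)
      refine h2.congr_deriv ?_
      field_simp
      ring
    exact h1.exp
  have hΦd : HasDerivAt (fun t : ℝ => t ^ (α - 1) * Real.exp (-β * t) * t)
      (x.2 ^ (α - 1) * Real.exp (-β * x.2) * (α - β * x.2)) x.2 := by
    have e1 : HasDerivAt (fun t : ℝ => t ^ α) (α * x.2 ^ (α - 1)) x.2 :=
      Real.hasDerivAt_rpow_const (Or.inl hx2.ne')
    have e2 : HasDerivAt (fun t : ℝ => Real.exp (-β * t)) (Real.exp (-β * x.2) * (-β)) x.2 := by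
      have h0 : HasDerivAt (fun t : ℝ => -β * t) (-β) x.2 := by
        simpa using (hasDerivAt_id x.2).const_mul (-β)
      exact h0.exp
    have e3 := e1.mul e2
    have heq : (fun t : ℝ => t ^ (α - 1) * Real.exp (-β * t) * t) =ᶠ[nhds x.2]
        fun t : ℝ => t ^ α * Real.exp (-β * t) := by
      filter_upwards [Ioi_mem_nhds hx2] with t ht
      have h : (t : ℝ) ^ α = t ^ (α - 1) * t := by
        nth_rewrite 1 [show α = (α - 1) + 1 by ring]
        rw [Real.rpow_add ht, Real.rpow_one]
      rw [h]; ring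
    have e4 := e3.congr_of_eventuallyEq heq
    refine e4.congr_deriv ?_
    have h : x.2 ^ α = x.2 ^ (α - 1) * x.2 := by
      nth_rewrite 1 [show α = (α - 1) + 1 by ring]
      rw [Real.rpow_add hx2, Real.rpow_one]
    rw [h]; ring
  have hfst : HasFDerivAt (fun y : ℝ × ℝ => Real.exp (-(y.1 - μ) ^ 2 / (2 * σ2)))
      ((Real.exp (-(x.1 - μ) ^ 2 / (2 * σ2)) * (-(x.1 - μ) / σ2)) •
        ContinuousLinearMap.fst ℝ ℝ ℝ) x :=
    hAd.comp_hasFDerivAt x hasFDerivAt_fst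
  have hsnd : HasFDerivAt (fun y : ℝ × ℝ => y.2 ^ (α - 1) * Real.exp (-β * y.2) * y.2)
      ((x.2 ^ (α - 1) * Real.exp (-β * x.2) * (α - β * x.2)) •
        ContinuousLinearMap.snd ℝ ℝ ℝ) x :=
    hΦd.comp_hasFDerivAt x hasFDerivAt_snd
  have hP := hfst.mul hsnd
  have hg0 := hP.mul hfd.hasFDerivAt
  refine ⟨_, hg0.congr_of_eventuallyEq (Filter.Eventually.of_forall fun y => by
    simp only [hρ, Pi.mul_apply]; ring), ?_, ?_⟩
  · simp only [ContinuousLinearMap.add_apply, ContinuousLinearMap.smul_apply,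
      ContinuousLinearMap.coe_fst', ContinuousLinearMap.coe_snd', smul_eq_mul, hρ x, Pi.mul_apply]
    ring
  · simp only [ContinuousLinearMap.add_apply, ContinuousLinearMap.smul_apply,
      ContinuousLinearMap.coe_fst', ContinuousLinearMap.coe_snd', smul_eq_mul, hρ x, Pi.mul_apply]
    ring

/-- Stein identity for the product of `N(μ,σ²)` and `Γ(α,β)` truncated to
`K = B_r(m) ∩ (ℝ × (0,∞))`, with weight `τ(x) = x₂`:
`E[X₂(μ-X₁)/σ² f(X) + X₂ ∂₁f(X)] = 0` and `E[(α-βX₂) f(X) + X₂ ∂₂f(X)] = 0`. -/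
theorem stmt11 (μ σ2 α β : ℝ) (hσ2 : 0 < σ2) (hα : 0 < α) (hβ : 0 < β)
    (m : ℝ × ℝ) (r : ℝ) (hr : 0 < r)
    (K : Set (ℝ × ℝ)) (hK : K = Metric.ball m r ∩ {x : ℝ × ℝ | 0 < x.2})
    (hKne : K.Nonempty)
    (ρ : ℝ × ℝ → ℝ)
    (hρ : ∀ x, ρ x = Real.exp (-(x.1 - μ) ^ 2 / (2 * σ2)) *
      (x.2 ^ (α - 1) * Real.exp (-β * x.2)))
    (C : ℝ) (hC : C = ∫ x in K, ρ x)
    (p : ℝ × ℝ → ℝ) (hp : ∀ x, p x = C⁻¹ * ρ x)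
    (f : ℝ × ℝ → ℝ)
    (hf : ContDiffOn ℝ (⊤ : ℕ∞) f (interior K)) (hfc : ContinuousOn f (closure K))
    (hf0 : ∀ x ∈ frontier K \ {x : ℝ × ℝ | x.2 = 0}, f x = 0)
    (hdecay : ∀ y ∈ frontier K, y.2 = 0 →
      Tendsto (fun x => x.2 * ρ x * f x) (nhdsWithin y K) (nhds 0))
    (hint : IntegrableOn (fun x => ‖fderiv ℝ (fun y : ℝ × ℝ => ρ y * y.2 * f y) x‖) K) :
    (∫ x in K, (x.2 * (μ - x.1) / σ2 * f x + x.2 * fderiv ℝ f x (1, 0)) * p x = 0) ∧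
    (∫ x in K, ((α - β * x.2) * f x + x.2 * fderiv ℝ f x (0, 1)) * p x = 0) := by
  set g : ℝ × ℝ → ℝ := fun y => ρ y * y.2 * f y with hgdef
  set a₁ : ℝ := m.1 - r with ha₁
  set b₁ : ℝ := m.1 + r with hb₁
  set a₂ : ℝ := max (m.2 - r) 0 with ha₂
  set b₂ : ℝ := m.2 + r with hb₂
  -- K is an open box (product metric!)
  have hK' : K = Ioo a₁ b₁ ×ˢ Ioo a₂ b₂ := by
    ext x
    rw [hK]
    simp only [mem_inter_iff, Metric.mem_ball, Prod.dist_eq, Real.dist_eq, max_lt_iff,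
      abs_sub_lt_iff, mem_setOf_eq, mem_prod, mem_Ioo, ha₁, hb₁, ha₂, hb₂]
    constructor
    · rintro ⟨⟨⟨h1, h2⟩, h3, h4⟩, h5⟩
      exact ⟨⟨by linarith, by linarith⟩, ⟨by linarith, by linarith⟩, by linarith⟩
    · rintro ⟨⟨h1, h2⟩, ⟨h3, h4⟩, h5⟩
      exact ⟨⟨⟨by linarith, by linarith⟩, by linarith, by linarith⟩, by linarith⟩
  have hKopen : IsOpen K := by rw [hK']; exact isOpen_Ioo.prod isOpen_Ioo
  have hKmeas : MeasurableSet K := hKopen.measurableSet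
  have hab₁ : a₁ < b₁ := by simp only [ha₁, hb₁]; linarith
  have hab₂ : a₂ < b₂ := by
    obtain ⟨x, hx⟩ := hKne
    rw [hK'] at hx
    exact lt_trans hx.2.1 hx.2.2
  set a : ℝ × ℝ := (a₁, a₂) with ha
  set b : ℝ × ℝ := (b₁, b₂) with hb
  have hab : a ≤ b := ⟨hab₁.le, hab₂.le⟩
  have hIcc : Icc a b = Icc a₁ b₁ ×ˢ Icc a₂ b₂ := Icc_prod_eq a b
  have hcl : closure K = Icc a b := by
    rw [hK', hIcc, closure_prod_eq, closure_Ioo hab₁.ne, closure_Ioo hab₂.ne]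
  have hKsub : K ⊆ Icc a b := by
    rw [hK', hIcc]; exact prod_mono Ioo_subset_Icc_self Ioo_subset_Icc_self
  -- the complement of K in the closed box is null
  have hnull : volume (Icc a b \ K) = 0 := by
    have hvol : volume (Icc a b) = volume K := by
      rw [hIcc, hK', Measure.volume_eq_prod, Measure.prod_prod, Measure.prod_prod,
        Real.volume_Icc, Real.volume_Icc, Real.volume_Ioo, Real.volume_Ioo]
    have hfin : volume K ≠ ⊤ := by
      rw [hK', Measure.volume_eq_prod, Measure.prod_prod, Real.volume_Ioo, Real.volume_Ioo]
      exact ENNReal.mul_ne_top ENNReal.ofReal_ne_top ENNReal.ofReal_ne_top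
    rw [measure_diff hKsub hKmeas.nullMeasurableSet hfin, hvol, tsub_self]
  have hKae : K =ᵐ[volume] Icc a b :=
    (MeasureTheory.ae_eq_set).2 ⟨by rw [diff_eq_empty.2 hKsub, measure_empty], hnull⟩
  -- differentiability of f on K
  have hfK : DifferentiableOn ℝ f K := by
    have := hf.differentiableOn (by simp)
    rwa [hKopen.interior_eq] at this
  -- key derivative computation on K
  have key : ∀ x ∈ K, HasFDerivAt g (fderiv ℝ g x) x ∧
      fderiv ℝ g x (1, 0) = (x.2 * (μ - x.1) / σ2 * f x + x.2 * fderiv ℝ f x (1, 0)) * ρ x ∧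
      fderiv ℝ g x (0, 1) = ((α - β * x.2) * f x + x.2 * fderiv ℝ f x (0, 1)) * ρ x := by
    intro x hx
    have hx2 : 0 < x.2 := by
      rw [hK'] at hx
      exact lt_of_le_of_lt (le_max_right _ _) hx.2.1
    have hfd : DifferentiableAt ℝ f x := hfK.differentiableAt (hKopen.mem_nhds hx)
    obtain ⟨L, hL, h1, h2⟩ := stein_aux μ σ2 α β hσ2 ρ hρ f x hx2 hfd
    have hLf : fderiv ℝ g x = L := hL.fderiv
    rw [hLf]
    exact ⟨hL, h1, h2⟩
  -- the indicator extension of g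
  set G : ℝ × ℝ → ℝ := K.indicator g with hGdef
  have hGK : ∀ x ∈ K, G x = g x := fun x hx => indicator_of_mem hx g
  -- continuity of G on the closed box
  have HcG : ContinuousOn G (Icc a b) := by
    intro y hy
    by_cases hyK : y ∈ K
    · have hc : ContinuousAt g y := ((key y hyK).1).differentiableAt.continuousAt
      have : ContinuousAt G y :=
        hc.congr (Filter.eventuallyEq_of_mem (hKopen.mem_nhds hyK)
          (fun z hz => (hGK z hz).symm))
      exact this.continuousWithinAt
    · have hycl : y ∈ closure K := by rw [hcl]; exact hy
      have hyF : y ∈ frontier K := by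
        rw [frontier, hKopen.interior_eq]; exact ⟨hycl, hyK⟩
      have hgK : Tendsto g (nhdsWithin y K) (nhds 0) := by
        by_cases h0 : y.2 = 0
        · refine (hdecay y hyF h0).congr fun x => by rw [hgdef]; ring
        · have hy2 : 0 < y.2 := by
            have : a₂ ≤ y.2 := hy.1.2
            have h0' : (0 : ℝ) ≤ y.2 := le_trans (le_max_right _ _) this
            exact lt_of_le_of_ne h0' (Ne.symm h0)
          have hfy : f y = 0 := hf0 y ⟨hyF, h0⟩
          have hft : Tendsto f (nhdsWithin y K) (nhds 0) := by
            have := hfc y hycl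
            rw [ContinuousWithinAt, hfy] at this
            exact this.mono_left (nhdsWithin_mono y subset_closure)
          have hρc : ContinuousAt ρ y := by
            have hρfun : ρ = fun x : ℝ × ℝ => Real.exp (-(x.1 - μ) ^ 2 / (2 * σ2)) *
                (x.2 ^ (α - 1) * Real.exp (-β * x.2)) := funext hρ
            rw [hρfun]
            have c1 : ContinuousAt (fun x : ℝ × ℝ =>
                Real.exp (-(x.1 - μ) ^ 2 / (2 * σ2))) y := by fun_prop
            have c2 : ContinuousAt (fun x : ℝ × ℝ => x.2 ^ (α - 1)) y :=
              (Real.continuousAt_rpow_const y.2 (α - 1) (Or.inl hy2.ne')).comp continuousAt_snd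
            have c3 : ContinuousAt (fun x : ℝ × ℝ => Real.exp (-β * x.2)) y := by fun_prop
            exact c1.mul (c2.mul c3)
          have := (hρc.continuousWithinAt.tendsto.mul
            (continuousAt_snd.continuousWithinAt.tendsto (s := K))).mul hft
          simpa using this
      have hGy : G y = 0 := indicator_of_notMem hyK g
      have hT : Tendsto G (nhds y) (nhds 0) := by
        have hsplit : nhds y = nhdsWithin y K ⊔ nhdsWithin y Kᶜ := by
          rw [← nhdsWithin_union, union_compl_self, nhdsWithin_univ]
        rw [hsplit, tendsto_sup]
        constructor
        · exact hgK.congr' (eventually_mem_nhdsWithin.mono fun x hx => (hGK x hx).symm)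
        · exact tendsto_const_nhds.congr'
            (eventually_mem_nhdsWithin.mono fun x hx => (indicator_of_notMem hx g).symm)
      show Tendsto G (nhdsWithin y (Icc a b)) (nhds (G y))
      rw [hGy]
      exact hT.mono_left nhdsWithin_le_nhds
  -- differentiability of G on the open box
  have HdG : ∀ x ∈ Ioo a.1 b.1 ×ˢ Ioo a.2 b.2 \ (∅ : Set (ℝ × ℝ)),
      HasFDerivAt G (fderiv ℝ g x) x := by
    intro x hx
    have hxK : x ∈ K := by rw [hK']; exact hx.1
    exact ((key x hxK).1).congr_of_eventuallyEq
      (Filter.eventuallyEq_of_mem (hKopen.mem_nhds hxK) (fun z hz => hGK z hz))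
  have Hd0 : ∀ x ∈ Ioo a.1 b.1 ×ˢ Ioo a.2 b.2 \ (∅ : Set (ℝ × ℝ)),
      HasFDerivAt (fun _ : ℝ × ℝ => (0 : ℝ)) ((fun _ : ℝ × ℝ => (0 : ℝ × ℝ →L[ℝ] ℝ)) x) x :=
    fun x _ => hasFDerivAt_const 0 x
  -- integrability of the component derivatives on the closed box
  have hInt : ∀ e : ℝ × ℝ, IntegrableOn (fun x => fderiv ℝ g x e) (Icc a b) := by
    intro e
    have hKint : IntegrableOn (fun x => fderiv ℝ g x e) K := by
      refine Integrable.mono' (hint.mul_const ‖e‖)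
        ((measurable_fderiv_apply_const ℝ g e).aestronglyMeasurable) ?_
      exact Filter.Eventually.of_forall fun x => (fderiv ℝ g x).le_opNorm e
    have hdiffint : IntegrableOn (fun x => fderiv ℝ g x e) (Icc a b \ K) := by
      rw [IntegrableOn, Measure.restrict_eq_zero.2 hnull]
      exact integrable_zero_measure
    exact (hKint.union hdiffint).mono_set fun z hz =>
      (em (z ∈ K)).elim Or.inl fun h => Or.inr ⟨hz, h⟩
  -- boundary values of G vanish
  have hG1 : ∀ y : ℝ, G (a.1, y) = 0 := by
    intro y
    refine indicator_of_notMem ?_ g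
    rw [hK']
    rintro ⟨h1, -⟩
    exact lt_irrefl a₁ h1.1
  have hG2 : ∀ y : ℝ, G (b.1, y) = 0 := by
    intro y
    refine indicator_of_notMem ?_ g
    rw [hK']
    rintro ⟨h1, -⟩
    exact lt_irrefl b₁ h1.2
  have hG3 : ∀ y : ℝ, G (y, a.2) = 0 := by
    intro y
    refine indicator_of_notMem ?_ g
    rw [hK']
    rintro ⟨-, h2⟩
    exact lt_irrefl a₂ h2.1
  have hG4 : ∀ y : ℝ, G (y, b.2) = 0 := by
    intro y
    refine indicator_of_notMem ?_ g
    rw [hK']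
    rintro ⟨-, h2⟩
    exact lt_irrefl b₂ h2.2
  -- divergence theorem, first coordinate
  have div1 : (∫ x in K, fderiv ℝ g x (1, 0)) = 0 := by
    have H := integral_divergence_prod_Icc_of_hasFDerivAt_off_countable_of_le
      G (fun _ => (0 : ℝ)) (fun x => fderiv ℝ g x) (fun _ => (0 : ℝ × ℝ →L[ℝ] ℝ))
      a b hab ∅ countable_empty HcG continuousOn_const HdG Hd0
      (by simpa using hInt (1, 0))
    simp only [ContinuousLinearMap.zero_apply, add_zero, intervalIntegral.integral_const,
      smul_zero, sub_zero, zero_add, hG1, hG2, intervalIntegral.integral_zero, sub_self] at H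
    rw [setIntegral_congr_set hKae]
    exact H
  -- divergence theorem, second coordinate
  have div2 : (∫ x in K, fderiv ℝ g x (0, 1)) = 0 := by
    have H := integral_divergence_prod_Icc_of_hasFDerivAt_off_countable_of_le
      (fun _ => (0 : ℝ)) G (fun _ => (0 : ℝ × ℝ →L[ℝ] ℝ)) (fun x => fderiv ℝ g x)
      a b hab ∅ countable_empty continuousOn_const HcG Hd0 HdG
      (by simpa using hInt (0, 1))
    simp only [ContinuousLinearMap.zero_apply, zero_add, intervalIntegral.integral_const,
      smul_zero, sub_zero, add_zero, hG3, hG4, intervalIntegral.integral_zero, sub_self,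
      zero_sub, neg_eq_zero] at H
    rw [setIntegral_congr_set hKae]
    exact H
  constructor
  · have heq : ∫ x in K, (x.2 * (μ - x.1) / σ2 * f x + x.2 * fderiv ℝ f x (1, 0)) * p x =
        ∫ x in K, C⁻¹ * fderiv ℝ g x (1, 0) := by
      refine setIntegral_congr_fun hKmeas fun x hx => ?_
      rw [hp x, (key x hx).2.1]
      ring
    rw [heq, integral_const_mul, div1, mul_zero]
  · have heq : ∫ x in K, ((α - β * x.2) * f x + x.2 * fderiv ℝ f x (0, 1)) * p x =
        ∫ x in K, C⁻¹ * fderiv ℝ g x (0, 1) := by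
      refine setIntegral_congr_fun hKmeas fun x hx => ?_
      rw [hp x, (key x hx).2.2]
      ring
    rw [heq, integral_const_mul, div2, mul_zero]
end

section
/- Let X = (X⁽¹⁾, X⁽²⁾) have density proportional to exp(-(x₁-μ)²/(2σ²)) · x₂^{α-1}(1-x₂)^{β-1} on K = B_r(m) ∩ (ℝ × (0,1)) with σ², α, β > 0. For f smooth on int(K), continuous on cl(K), vanishing on ∂K ∖ ({x₂=0} ∪ {x₂=1}), with x₂(1-x₂) f(x) p_θ(x) → 0 as x₂ → 0 or x₂ → 1, and the gradient integrability condition, it holds that E[ X⁽²⁾(1-X⁽²⁾)(μ - X⁽¹⁾)/σ² · f(X) + X⁽²⁾(1-X⁽²⁾) ∂f/∂x₁(X) ] = 0 and E[ (α - (α+β)X⁽²⁾) f(X) + X⁽²⁾(1-X⁽²⁾) ∂f/∂x₂(X) ] = 0. -/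
open MeasureTheory Real Filter Set

lemma hasDerivAt_E (μ σ2 : ℝ) (hσ2 : σ2 ≠ 0) (t : ℝ) :
    HasDerivAt (fun t : ℝ => Real.exp (-(t - μ) ^ 2 / (2 * σ2)))
      (Real.exp (-(t - μ) ^ 2 / (2 * σ2)) * ((μ - t) / σ2)) t := by
  have h1 : HasDerivAt (fun t : ℝ => -(t - μ) ^ 2 / (2 * σ2)) ((μ - t) / σ2) t := by
    have h0 : HasDerivAt (fun t : ℝ => t - μ) 1 t := (hasDerivAt_id t).sub_const μ
    have h2 := (h0.pow 2).neg.div_const (2 * σ2)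
    convert h2 using 1 <;> try rfl
    field_simp
    ring
  exact h1.exp

lemma hasDerivAt_B (α β : ℝ) {t : ℝ} (h0 : t ≠ 0) (h1 : t ≠ 1) :
    HasDerivAt (fun t : ℝ => t ^ α * (1 - t) ^ β)
      (t ^ (α - 1) * (1 - t) ^ (β - 1) * (α - (α + β) * t)) t := by
  have h1m : (1 : ℝ) - t ≠ 0 := sub_ne_zero.2 (Ne.symm h1)
  have hA : HasDerivAt (fun t : ℝ => t ^ α) (α * t ^ (α - 1)) t :=
    Real.hasDerivAt_rpow_const (Or.inl h0)
  have hin : HasDerivAt (fun t : ℝ => 1 - t) (-1) t := (hasDerivAt_id t).const_sub 1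
  have hB1 : HasDerivAt (fun t : ℝ => (1 - t) ^ β) (β * (1 - t) ^ (β - 1) * (-1)) t :=
    (Real.hasDerivAt_rpow_const (p := β) (Or.inl h1m)).comp t hin
  have h := hA.mul hB1
  convert h using 1 <;> try rfl
  have e1 : t ^ α = t ^ (α - 1) * t := by
    nth_rewrite 1 [show α = (α - 1) + 1 by ring]
    exact Real.rpow_add_one h0 _
  have e2 : (1 - t) ^ β = (1 - t) ^ (β - 1) * (1 - t) := by
    nth_rewrite 1 [show β = (β - 1) + 1 by ring]
    exact Real.rpow_add_one h1m _
  rw [e1, e2]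
  ring

/-- Stein identity for the product of `N(μ,σ²)` and `Beta(α,β)` truncated to
`K = B_r(m) ∩ (ℝ × (0,1))`, with weight `τ(x) = x₂(1-x₂)`:
`E[X₂(1-X₂)(μ-X₁)/σ² f(X) + X₂(1-X₂) ∂₁f(X)] = 0` and
`E[(α-(α+β)X₂) f(X) + X₂(1-X₂) ∂₂f(X)] = 0`. -/
theorem stmt12 (μ σ2 α β : ℝ) (hσ2 : 0 < σ2) (hα : 0 < α) (hβ : 0 < β)
    (m : ℝ × ℝ) (r : ℝ) (hr : 0 < r)
    (K : Set (ℝ × ℝ)) (hK : K = Metric.ball m r ∩ {x : ℝ × ℝ | x.2 ∈ Set.Ioo (0:ℝ) 1})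
    (hKne : K.Nonempty)
    (ρ : ℝ × ℝ → ℝ)
    (hρ : ∀ x, ρ x = Real.exp (-(x.1 - μ) ^ 2 / (2 * σ2)) *
      (x.2 ^ (α - 1) * (1 - x.2) ^ (β - 1)))
    (C : ℝ) (hC : C = ∫ x in K, ρ x)
    (p : ℝ × ℝ → ℝ) (hp : ∀ x, p x = C⁻¹ * ρ x)
    (f : ℝ × ℝ → ℝ)
    (hf : ContDiffOn ℝ (⊤ : ℕ∞) f (interior K)) (hfc : ContinuousOn f (closure K))
    (hf0 : ∀ x ∈ frontier K \ ({x : ℝ × ℝ | x.2 = 0} ∪ {x : ℝ × ℝ | x.2 = 1}), f x = 0)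
    (hdecay : ∀ y ∈ frontier K, (y.2 = 0 ∨ y.2 = 1) →
      Tendsto (fun x => x.2 * (1 - x.2) * f x * p x) (nhdsWithin y K) (nhds 0))
    (hint : IntegrableOn
      (fun x => ‖fderiv ℝ (fun y : ℝ × ℝ => ρ y * (y.2 * (1 - y.2)) * f y) x‖) K) :
    (∫ x in K, (x.2 * (1 - x.2) * (μ - x.1) / σ2 * f x +
        x.2 * (1 - x.2) * fderiv ℝ f x (1, 0)) * p x = 0) ∧
    (∫ x in K, ((α - (α + β) * x.2) * f x +
        x.2 * (1 - x.2) * fderiv ℝ f x (0, 1)) * p x = 0) := by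
  have hσ2' : σ2 ≠ 0 := ne_of_gt hσ2
  set g : ℝ × ℝ → ℝ := fun y => ρ y * (y.2 * (1 - y.2)) * f y with hgdef
  by_cases hC0 : C = 0
  · have hp0 : ∀ x, p x = 0 := fun x => by rw [hp, hC0, inv_zero, zero_mul]
    simp [hp0]
  -- rectangle description of K
  set a1 : ℝ := m.1 - r with ha1
  set b1 : ℝ := m.1 + r with hb1
  set a2 : ℝ := max (m.2 - r) 0 with ha2
  set b2 : ℝ := min (m.2 + r) 1 with hb2
  have hK' : K = Ioo a1 b1 ×ˢ Ioo a2 b2 := by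
    rw [hK, ← ball_prod_same, Real.ball_eq_Ioo, Real.ball_eq_Ioo]
    have hset : {x : ℝ × ℝ | x.2 ∈ Ioo (0:ℝ) 1} = (univ : Set ℝ) ×ˢ Ioo (0:ℝ) 1 := by
      ext x; simp
    rw [hset, prod_inter_prod, inter_univ, Ioo_inter_Ioo]
  have hKopen : IsOpen K := by rw [hK']; exact isOpen_Ioo.prod isOpen_Ioo
  have hintK : interior K = K := hKopen.interior_eq
  obtain ⟨z, hz⟩ := hKne
  have hz' := hz
  rw [hK'] at hz'
  have h11 : a1 < b1 := lt_trans hz'.1.1 hz'.1.2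
  have h22 : a2 < b2 := lt_trans hz'.2.1 hz'.2.2
  set a : ℝ × ℝ := (a1, a2) with ha
  set b : ℝ × ℝ := (b1, b2) with hb
  have hle : a ≤ b := ⟨h11.le, h22.le⟩
  -- membership facts
  have hmem2 : ∀ x ∈ K, x.2 ∈ Ioo (0:ℝ) 1 := fun x hx => by rw [hK] at hx; exact hx.2
  -- pointwise derivative of g on K
  have key : ∀ x ∈ K, HasFDerivAt g (fderiv ℝ g x) x ∧
      fderiv ℝ g x (1, 0) = ρ x * (x.2 * (1 - x.2) * (μ - x.1) / σ2 * f x +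
        x.2 * (1 - x.2) * fderiv ℝ f x (1, 0)) ∧
      fderiv ℝ g x (0, 1) = ρ x * ((α - (α + β) * x.2) * f x +
        x.2 * (1 - x.2) * fderiv ℝ f x (0, 1)) := by
    intro x hx
    have hx2 := hmem2 x hx
    have h0 : x.2 ≠ 0 := ne_of_gt hx2.1
    have h1' : x.2 ≠ 1 := ne_of_lt hx2.2
    have h1m : (1:ℝ) - x.2 ≠ 0 := sub_ne_zero.2 (Ne.symm h1')
    have hfd : HasFDerivAt f (fderiv ℝ f x) x :=
      (((hf.differentiableOn (by simp)).differentiableAt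
        (by rw [hintK]; exact hKopen.mem_nhds hx))).hasFDerivAt
    have hEf : HasFDerivAt (fun y : ℝ × ℝ => Real.exp (-(y.1 - μ) ^ 2 / (2 * σ2)))
        ((Real.exp (-(x.1 - μ) ^ 2 / (2 * σ2)) * ((μ - x.1) / σ2)) •
          ContinuousLinearMap.fst ℝ ℝ ℝ) x :=
      (hasDerivAt_E μ σ2 hσ2' x.1).comp_hasFDerivAt x hasFDerivAt_fst
    have hBf : HasFDerivAt (fun y : ℝ × ℝ => y.2 ^ α * (1 - y.2) ^ β)
        ((x.2 ^ (α - 1) * (1 - x.2) ^ (β - 1) * (α - (α + β) * x.2)) •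
          ContinuousLinearMap.snd ℝ ℝ ℝ) x :=
      (hasDerivAt_B α β h0 h1').comp_hasFDerivAt x hasFDerivAt_snd
    have hprod := (hEf.mul hBf).mul hfd
    have hEq : (fun y : ℝ × ℝ => Real.exp (-(y.1 - μ) ^ 2 / (2 * σ2)) *
        (y.2 ^ α * (1 - y.2) ^ β) * f y) =ᶠ[nhds x] g := by
      filter_upwards [hKopen.mem_nhds hx] with y hy
      have hy2 := hmem2 y hy
      have hy0 : y.2 ≠ 0 := ne_of_gt hy2.1
      have hy1 : (1:ℝ) - y.2 ≠ 0 := sub_ne_zero.2 (ne_of_gt hy2.2)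
      have e1 : y.2 ^ α = y.2 ^ (α - 1) * y.2 := by
        nth_rewrite 1 [show α = (α - 1) + 1 by ring]
        exact Real.rpow_add_one hy0 _
      have e2 : (1 - y.2) ^ β = (1 - y.2) ^ (β - 1) * (1 - y.2) := by
        nth_rewrite 1 [show β = (β - 1) + 1 by ring]
        exact Real.rpow_add_one hy1 _
      show _ = ρ y * (y.2 * (1 - y.2)) * f y
      rw [hρ, e1, e2]; ring
    have hgx := hprod.congr_of_eventuallyEq hEq.symm
    refine ⟨by rw [hgx.fderiv]; exact hgx, ?_, ?_⟩
    · rw [hgx.fderiv]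
      simp only [ContinuousLinearMap.add_apply, ContinuousLinearMap.smul_apply,
        ContinuousLinearMap.coe_fst', ContinuousLinearMap.coe_snd', smul_eq_mul, Pi.mul_apply]
      rw [hρ]
      have e1 : x.2 ^ α = x.2 ^ (α - 1) * x.2 := by
        nth_rewrite 1 [show α = (α - 1) + 1 by ring]
        exact Real.rpow_add_one h0 _
      have e2 : (1 - x.2) ^ β = (1 - x.2) ^ (β - 1) * (1 - x.2) := by
        nth_rewrite 1 [show β = (β - 1) + 1 by ring]
        exact Real.rpow_add_one h1m _
      rw [e1, e2]
      field_simp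
      ring
    · rw [hgx.fderiv]
      simp only [ContinuousLinearMap.add_apply, ContinuousLinearMap.smul_apply,
        ContinuousLinearMap.coe_fst', ContinuousLinearMap.coe_snd', smul_eq_mul, Pi.mul_apply]
      rw [hρ]
      have e1 : x.2 ^ α = x.2 ^ (α - 1) * x.2 := by
        nth_rewrite 1 [show α = (α - 1) + 1 by ring]
        exact Real.rpow_add_one h0 _
      have e2 : (1 - x.2) ^ β = (1 - x.2) ^ (β - 1) * (1 - x.2) := by
        nth_rewrite 1 [show β = (β - 1) + 1 by ring]
        exact Real.rpow_add_one h1m _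
      rw [e1, e2]
      ring

  -- the indicator extension G
  set G : ℝ × ℝ → ℝ := K.indicator g with hGdef
  have hGnot : ∀ x, x ∉ K → G x = 0 := fun x hx => indicator_of_notMem hx g
  have hGcont : Continuous G := by
    rw [continuous_iff_continuousAt]
    intro y
    by_cases hyK : y ∈ K
    · have hEq : G =ᶠ[nhds y] g := by
        filter_upwards [hKopen.mem_nhds hyK] with z hz
        exact indicator_of_mem hz g
      rw [continuousAt_congr hEq]
      have hy2 := hmem2 y hyK
      have c1 : ContinuousAt (fun x : ℝ × ℝ => Real.exp (-(x.1 - μ) ^ 2 / (2 * σ2))) y := by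
        fun_prop
      have c2 : ContinuousAt (fun x : ℝ × ℝ => x.2 ^ (α - 1)) y :=
        continuous_snd.continuousAt.rpow_const (Or.inl (ne_of_gt hy2.1))
      have c3 : ContinuousAt (fun x : ℝ × ℝ => (1 - x.2) ^ (β - 1)) y :=
        ((continuous_const.sub continuous_snd).continuousAt).rpow_const
          (Or.inl (sub_ne_zero.2 (ne_of_gt hy2.2)))
      have cρ : ContinuousAt ρ y := by
        have hr : ρ = fun x : ℝ × ℝ => Real.exp (-(x.1 - μ) ^ 2 / (2 * σ2)) *
            (x.2 ^ (α - 1) * (1 - x.2) ^ (β - 1)) := funext hρ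
        rw [hr]
        exact c1.mul (c2.mul c3)
      have cf : ContinuousAt f y :=
        (hf.continuousOn).continuousAt (by rw [hintK]; exact hKopen.mem_nhds hyK)
      exact (cρ.mul (by fun_prop)).mul cf
    · by_cases hyc : y ∈ closure K
      · have hyf : y ∈ frontier K := by
          rw [hKopen.frontier_eq]; exact ⟨hyc, hyK⟩
        have hG0 : G y = 0 := hGnot y hyK
        have hlim : Tendsto g (nhdsWithin y K) (nhds 0) := by
          by_cases hy01 : y.2 = 0 ∨ y.2 = 1
          · have h := (hdecay y hyf hy01).const_mul C
            rw [mul_zero] at h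
            refine h.congr fun x => ?_
            rw [hp]
            show C * (x.2 * (1 - x.2) * f x * (C⁻¹ * ρ x)) = ρ x * (x.2 * (1 - x.2)) * f x
            field_simp
          · push_neg at hy01
            have hf0y : f y = 0 := hf0 y ⟨hyf, by simp [hy01.1, hy01.2]⟩
            have c2 : ContinuousAt (fun x : ℝ × ℝ => x.2 ^ (α - 1)) y :=
              continuous_snd.continuousAt.rpow_const (Or.inl hy01.1)
            have c3 : ContinuousAt (fun x : ℝ × ℝ => (1 - x.2) ^ (β - 1)) y :=
              ((continuous_const.sub continuous_snd).continuousAt).rpow_const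
                (Or.inl (sub_ne_zero.2 (Ne.symm hy01.2)))
            have cρ : ContinuousAt ρ y := by
              have hr : ρ = fun x : ℝ × ℝ => Real.exp (-(x.1 - μ) ^ 2 / (2 * σ2)) *
                  (x.2 ^ (α - 1) * (1 - x.2) ^ (β - 1)) := funext hρ
              rw [hr]
              exact (by fun_prop :
                ContinuousAt (fun x : ℝ × ℝ => Real.exp (-(x.1 - μ) ^ 2 / (2 * σ2))) y).mul
                (c2.mul c3)
            have cτ : ContinuousAt (fun x : ℝ × ℝ => x.2 * (1 - x.2)) y := by fun_prop
            have cf : ContinuousWithinAt f K y := (hfc y hyc).mono subset_closure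
            have h : Tendsto g (nhdsWithin y K) (nhds (ρ y * (y.2 * (1 - y.2)) * f y)) :=
              (cρ.continuousWithinAt.mul cτ.continuousWithinAt).mul cf
            simpa [hf0y] using h
        rw [ContinuousAt, hG0]
        have hsup : nhds y = nhdsWithin y K ⊔ nhdsWithin y Kᶜ := by
          rw [← nhdsWithin_univ, ← union_compl_self K, nhdsWithin_union]
        rw [hsup, tendsto_sup]
        constructor
        · refine Tendsto.congr' ?_ hlim
          filter_upwards [self_mem_nhdsWithin] with z hz
          exact (indicator_of_mem hz g).symm
        · refine Tendsto.congr' ?_ tendsto_const_nhds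
          filter_upwards [self_mem_nhdsWithin] with z hz
          exact (indicator_of_notMem hz g).symm
      · have hEq : G =ᶠ[nhds y] fun _ => (0:ℝ) := by
          filter_upwards [(isClosed_closure.isOpen_compl).mem_nhds hyc] with z hz
          exact indicator_of_notMem (fun h => hz (subset_closure h)) g
        rw [continuousAt_congr hEq]
        exact continuousAt_const
  -- a.e. equality between the closed rectangle and K
  have haeK : (Icc ((a1, a2) : ℝ × ℝ) (b1, b2) : Set (ℝ × ℝ)) =ᵐ[volume] K := by
    rw [hK', Icc_prod_eq, Measure.volume_eq_prod]
    exact (Measure.set_prod_ae_eq Ioo_ae_eq_Icc Ioo_ae_eq_Icc).symm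
  have hle : ((a1, a2) : ℝ × ℝ) ≤ (b1, b2) := ⟨h11.le, h22.le⟩
  -- integrability
  have hi1 : ∀ v : ℝ × ℝ, ‖v‖ ≤ 1 → IntegrableOn (fun x => fderiv ℝ g x v) K := by
    intro v hv
    refine hint.mono' ((measurable_fderiv_apply_const ℝ g v).aestronglyMeasurable) ?_
    refine Eventually.of_forall fun x => ?_
    calc ‖fderiv ℝ g x v‖ ≤ ‖fderiv ℝ g x‖ * ‖v‖ := ContinuousLinearMap.le_opNorm _ _
      _ ≤ ‖fderiv ℝ g x‖ * 1 := by
          exact mul_le_mul_of_nonneg_left hv (norm_nonneg _)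
      _ = ‖fderiv ℝ g x‖ := mul_one _
  have hiIcc : ∀ v : ℝ × ℝ, ‖v‖ ≤ 1 →
      IntegrableOn (fun x => fderiv ℝ g x v) (Icc ((a1, a2) : ℝ × ℝ) (b1, b2)) := by
    intro v hv
    rw [IntegrableOn, Measure.restrict_congr_set haeK]
    exact hi1 v hv
  -- derivative hypothesis for the divergence theorem
  have hdG : ∀ x ∈ (Ioo ((a1, a2) : ℝ × ℝ).1 ((b1, b2) : ℝ × ℝ).1 ×ˢ
      Ioo ((a1, a2) : ℝ × ℝ).2 ((b1, b2) : ℝ × ℝ).2) \ (∅ : Set (ℝ × ℝ)),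
      HasFDerivAt G (fderiv ℝ g x) x := by
    intro x hx
    rw [diff_empty] at hx
    have hxK : x ∈ K := by rw [hK']; exact hx
    refine ((key x hxK).1).congr_of_eventuallyEq ?_
    filter_upwards [hKopen.mem_nhds hxK] with z hz
    exact indicator_of_mem hz g
  have hdZ : ∀ x ∈ (Ioo ((a1, a2) : ℝ × ℝ).1 ((b1, b2) : ℝ × ℝ).1 ×ˢ
      Ioo ((a1, a2) : ℝ × ℝ).2 ((b1, b2) : ℝ × ℝ).2) \ (∅ : Set (ℝ × ℝ)),
      HasFDerivAt (fun _ : ℝ × ℝ => (0 : ℝ)) (0 : ℝ × ℝ →L[ℝ] ℝ) x :=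
    fun x _ => hasFDerivAt_const 0 x
  -- edges vanish
  have edgeb1 : ∀ y : ℝ, G (b1, y) = 0 := fun y =>
    hGnot _ (by rw [hK']; exact fun h => lt_irrefl b1 (mem_prod.1 h).1.2)
  have edgea1 : ∀ y : ℝ, G (a1, y) = 0 := fun y =>
    hGnot _ (by rw [hK']; exact fun h => lt_irrefl a1 (mem_prod.1 h).1.1)
  have edgeb2 : ∀ x : ℝ, G (x, b2) = 0 := fun x =>
    hGnot _ (by rw [hK']; exact fun h => lt_irrefl b2 (mem_prod.1 h).2.2)
  have edgea2 : ∀ x : ℝ, G (x, a2) = 0 := fun x =>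
    hGnot _ (by rw [hK']; exact fun h => lt_irrefl a2 (mem_prod.1 h).2.1)
  -- first divergence application
  have div1 := integral_divergence_prod_Icc_of_hasFDerivAt_off_countable_of_le
      G (fun _ => (0 : ℝ)) (fun x => fderiv ℝ g x) (fun _ => (0 : ℝ × ℝ →L[ℝ] ℝ))
      (a1, a2) (b1, b2) hle ∅ countable_empty hGcont.continuousOn continuousOn_const
      hdG hdZ (by simpa using hiIcc (1, 0) (by simp [Prod.norm_def]))
  have hzero1 : ∫ x in Icc ((a1, a2) : ℝ × ℝ) (b1, b2), fderiv ℝ g x (1, 0) = 0 := by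
    simpa [edgeb1, edgea1, edgeb2, edgea2] using div1
  -- second divergence application
  have div2 := integral_divergence_prod_Icc_of_hasFDerivAt_off_countable_of_le
      (fun _ => (0 : ℝ)) G (fun _ => (0 : ℝ × ℝ →L[ℝ] ℝ)) (fun x => fderiv ℝ g x)
      (a1, a2) (b1, b2) hle ∅ countable_empty continuousOn_const hGcont.continuousOn
      hdZ hdG (by simpa using hiIcc (0, 1) (by simp [Prod.norm_def]))
  have hzero2 : ∫ x in Icc ((a1, a2) : ℝ × ℝ) (b1, b2), fderiv ℝ g x (0, 1) = 0 := by
    simpa [edgeb1, edgea1, edgeb2, edgea2] using div2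
  constructor
  · calc ∫ x in K, (x.2 * (1 - x.2) * (μ - x.1) / σ2 * f x +
          x.2 * (1 - x.2) * fderiv ℝ f x (1, 0)) * p x
        = ∫ x in K, C⁻¹ * fderiv ℝ g x (1, 0) := by
          refine setIntegral_congr_fun hKopen.measurableSet fun x hx => ?_
          rw [(key x hx).2.1, hp]
          ring
      _ = C⁻¹ * ∫ x in K, fderiv ℝ g x (1, 0) := integral_const_mul _ _
      _ = 0 := by
          rw [← Measure.restrict_congr_set haeK, hzero1, mul_zero]
  · calc ∫ x in K, ((α - (α + β) * x.2) * f x +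
          x.2 * (1 - x.2) * fderiv ℝ f x (0, 1)) * p x
        = ∫ x in K, C⁻¹ * fderiv ℝ g x (0, 1) := by
          refine setIntegral_congr_fun hKopen.measurableSet fun x hx => ?_
          rw [(key x hx).2.2, hp]
          ring
      _ = C⁻¹ * ∫ x in K, fderiv ℝ g x (0, 1) := integral_const_mul _ _
      _ = 0 := by
          rw [← Measure.restrict_congr_set haeK, hzero2, mul_zero]
end

section
/- Fix real numbers c₁,…,c_m and data X₁,…,Xₙ ∈ ℝ² with X_i = (X_i^{(1)}, X_i^{(2)}), X_i^{(2)} > 0. Given differentiable f₁, f₂ : ℝ² → ℝ, suppose the denominators D₁ = \overline{X^{(2)} f₁}·\overline{X^{(2)} ∂₁f₂} - \overline{X^{(2)} ∂₁f₁}·\overline{X^{(2)} f₂} and D₂ = \overline{X^{(2)} f₁}·\overline{f₂} - \overline{f₁}·\overline{X^{(2)} f₂} are nonzero. Define μ̂, σ̂², α̂, β̂ by the explicit ratio formulas (μ̂ = (\overline{X^{(2)}∂₁f₂}·\overline{X^{(2)}X^{(1)}f₁} - \overline{X^{(2)}∂₁f₁}·\overline{X^{(2)}X^{(1)}f₂})/D₁,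 etc.). Then (μ̂, σ̂², α̂, β̂) solves the system (1/n)Σᵢ [ X_i^{(2)}(μ̂ - X_i^{(1)})/σ̂² f_j(X_i) + X_i^{(2)} ∂₁f_j(X_i) ] = 0 and (1/n)Σᵢ [ (α̂ - β̂ X_i^{(2)}) f_j(X_i) + X_i^{(2)} ∂₂f_j(X_i) ] = 0 for j = 1,2, provided σ̂² ≠ 0. -/
open Finset

/-!
Both pairs of Stein equations are linear in the parameters: after expanding the sample means,
`(μ̂, σ̂²)` solves `μ X₂f_j + σ² X₂∂₁f_j = X₂X₁f_j` and `(α̂, β̂)` solves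
`α f_j - β X₂f_j = -X₂∂₂f_j` (`j = 1, 2`, bars omitted). The explicit estimators are exactly
Cramer's rule for these two `2 × 2` systems, with determinants `D₁` and `D₂`.
-/

variable {ι K : Type*} [Field K]

theorem cramer_rule_two {a₁ b₁ c₁ a₂ b₂ c₂ D x y : K} (hD : D = a₁ * b₂ - b₁ * a₂) (hD0 : D ≠ 0)
    (hx : x = (b₂ * c₁ - b₁ * c₂) / D) (hy : y = (a₁ * c₂ - a₂ * c₁) / D) :
    x * a₁ + y * b₁ = c₁ ∧ x * a₂ + y * b₂ = c₂ := by
  subst hx hy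
  constructor <;> field_simp <;> rw [hD] <;> ring

theorem mul_sum_normal_stein_eq_zero {s : Finset ι} {c μ σ2 : K} {x₁ x₂ f d : ι → K}
    (hσ : σ2 ≠ 0)
    (h : μ * (c * ∑ i ∈ s, x₂ i * f i) + σ2 * (c * ∑ i ∈ s, x₂ i * d i) =
      c * ∑ i ∈ s, x₂ i * x₁ i * f i) :
    c * ∑ i ∈ s, (x₂ i * (μ - x₁ i) / σ2 * f i + x₂ i * d i) = 0 := by
  have hmean : c * ∑ i ∈ s, (x₂ i * (μ - x₁ i) / σ2 * f i + x₂ i * d i) =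
      (μ * (c * ∑ i ∈ s, x₂ i * f i) + σ2 * (c * ∑ i ∈ s, x₂ i * d i) -
        c * ∑ i ∈ s, x₂ i * x₁ i * f i) / σ2 := by
    simp only [mul_sum, ← sum_add_distrib, ← sum_sub_distrib, sum_div]
    refine sum_congr rfl fun i _ => ?_
    field_simp
    ring
  rw [hmean, h, sub_self, zero_div]

theorem mul_sum_gamma_stein_eq_zero {s : Finset ι} {c α β : K} {x₂ f d : ι → K}
    (h : α * (c * ∑ i ∈ s, f i) - β * (c * ∑ i ∈ s, x₂ i * f i) =
      -(c * ∑ i ∈ s, x₂ i * d i)) :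
    c * ∑ i ∈ s, ((α - β * x₂ i) * f i + x₂ i * d i) = 0 := by
  have hmean : c * ∑ i ∈ s, ((α - β * x₂ i) * f i + x₂ i * d i) =
      α * (c * ∑ i ∈ s, f i) - β * (c * ∑ i ∈ s, x₂ i * f i) + c * ∑ i ∈ s, x₂ i * d i := by
    simp only [mul_sum, ← sum_add_distrib, ← sum_sub_distrib]
    refine sum_congr rfl fun i _ => ?_
    ring
  rw [hmean, h, neg_add_cancel]

theorem stmt13_general (n : ℕ)
    (X : Fin n → ℝ × ℝ)
    (f₁ f₂ : ℝ × ℝ → ℝ)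
    -- sample means (overline notation)
    (aX2f₁ aX2f₂ aX2d1f₁ aX2d1f₂ aX2X1f₁ aX2X1f₂ aX2d2f₁ aX2d2f₂ af₁ af₂ : ℝ)
    (h1 : aX2f₁ = (n : ℝ)⁻¹ * ∑ i, (X i).2 * f₁ (X i))
    (h2 : aX2f₂ = (n : ℝ)⁻¹ * ∑ i, (X i).2 * f₂ (X i))
    (h3 : aX2d1f₁ = (n : ℝ)⁻¹ * ∑ i, (X i).2 * fderiv ℝ f₁ (X i) (1, 0))
    (h4 : aX2d1f₂ = (n : ℝ)⁻¹ * ∑ i, (X i).2 * fderiv ℝ f₂ (X i) (1, 0))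
    (h5 : aX2X1f₁ = (n : ℝ)⁻¹ * ∑ i, (X i).2 * (X i).1 * f₁ (X i))
    (h6 : aX2X1f₂ = (n : ℝ)⁻¹ * ∑ i, (X i).2 * (X i).1 * f₂ (X i))
    (h7 : aX2d2f₁ = (n : ℝ)⁻¹ * ∑ i, (X i).2 * fderiv ℝ f₁ (X i) (0, 1))
    (h8 : aX2d2f₂ = (n : ℝ)⁻¹ * ∑ i, (X i).2 * fderiv ℝ f₂ (X i) (0, 1))
    (h9 : af₁ = (n : ℝ)⁻¹ * ∑ i, f₁ (X i))
    (h10 : af₂ = (n : ℝ)⁻¹ * ∑ i, f₂ (X i))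
    -- denominators
    (D₁ D₂ : ℝ)
    (hD₁ : D₁ = aX2f₁ * aX2d1f₂ - aX2d1f₁ * aX2f₂)
    (hD₂ : D₂ = aX2f₁ * af₂ - af₁ * aX2f₂)
    (hD₁0 : D₁ ≠ 0) (hD₂0 : D₂ ≠ 0)
    -- the Stein estimators
    (muh s2h ah bh : ℝ)
    (hmu : muh = (aX2d1f₂ * aX2X1f₁ - aX2d1f₁ * aX2X1f₂) / D₁)
    (hs2 : s2h = (aX2f₁ * aX2X1f₂ - aX2f₂ * aX2X1f₁) / D₁)
    (ha : ah = (aX2f₂ * aX2d2f₁ - aX2f₁ * aX2d2f₂) / D₂)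
    (hb : bh = (af₂ * aX2d2f₁ - af₁ * aX2d2f₂) / D₂)
    (hs20 : s2h ≠ 0) :
    ((n : ℝ)⁻¹ * ∑ i, ((X i).2 * (muh - (X i).1) / s2h * f₁ (X i) +
        (X i).2 * fderiv ℝ f₁ (X i) (1, 0)) = 0) ∧
    ((n : ℝ)⁻¹ * ∑ i, ((X i).2 * (muh - (X i).1) / s2h * f₂ (X i) +
        (X i).2 * fderiv ℝ f₂ (X i) (1, 0)) = 0) ∧
    ((n : ℝ)⁻¹ * ∑ i, ((ah - bh * (X i).2) * f₁ (X i) +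
        (X i).2 * fderiv ℝ f₁ (X i) (0, 1)) = 0) ∧
    ((n : ℝ)⁻¹ * ∑ i, ((ah - bh * (X i).2) * f₂ (X i) +
        (X i).2 * fderiv ℝ f₂ (X i) (0, 1)) = 0) := by
  obtain ⟨hμσ₁, hμσ₂⟩ := cramer_rule_two hD₁ hD₁0 hmu hs2
  obtain ⟨hαβ₁, hαβ₂⟩ := cramer_rule_two (a₁ := af₁) (b₁ := -aX2f₁) (c₁ := -aX2d2f₁)
    (a₂ := af₂) (b₂ := -aX2f₂) (c₂ := -aX2d2f₂) (x := ah) (y := bh)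
    (by rw [hD₂]; ring) hD₂0 (by rw [ha]; ring) (by rw [hb]; ring)
  refine ⟨?_, ?_, ?_, ?_⟩
  · exact mul_sum_normal_stein_eq_zero hs20 (by rw [← h1, ← h3, ← h5]; exact hμσ₁)
  · exact mul_sum_normal_stein_eq_zero hs20 (by rw [← h2, ← h4, ← h6]; exact hμσ₂)
  · exact mul_sum_gamma_stein_eq_zero (by rw [← h9, ← h1, ← h7]; linear_combination hαβ₁)
  · exact mul_sum_gamma_stein_eq_zero (by rw [← h10, ← h2, ← h8]; linear_combination hαβ₂)

/-- The explicit Stein estimators `(μ̂, σ̂², α̂, β̂)` for the truncated normal–gamma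
product model solve the four empirical Stein equations, provided the denominators
`D₁, D₂` and `σ̂²` are nonzero. -/
theorem stmt13 (mm n : ℕ) (c : Fin mm → ℝ) (hn : 0 < n)
    (X : Fin n → ℝ × ℝ) (hX2 : ∀ i, 0 < (X i).2)
    (f₁ f₂ : ℝ × ℝ → ℝ) (hf₁ : Differentiable ℝ f₁) (hf₂ : Differentiable ℝ f₂)
    -- sample means (overline notation)
    (aX2f₁ aX2f₂ aX2d1f₁ aX2d1f₂ aX2X1f₁ aX2X1f₂ aX2d2f₁ aX2d2f₂ af₁ af₂ : ℝ)
    (h1 : aX2f₁ = (n : ℝ)⁻¹ * ∑ i, (X i).2 * f₁ (X i))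
    (h2 : aX2f₂ = (n : ℝ)⁻¹ * ∑ i, (X i).2 * f₂ (X i))
    (h3 : aX2d1f₁ = (n : ℝ)⁻¹ * ∑ i, (X i).2 * fderiv ℝ f₁ (X i) (1, 0))
    (h4 : aX2d1f₂ = (n : ℝ)⁻¹ * ∑ i, (X i).2 * fderiv ℝ f₂ (X i) (1, 0))
    (h5 : aX2X1f₁ = (n : ℝ)⁻¹ * ∑ i, (X i).2 * (X i).1 * f₁ (X i))
    (h6 : aX2X1f₂ = (n : ℝ)⁻¹ * ∑ i, (X i).2 * (X i).1 * f₂ (X i))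
    (h7 : aX2d2f₁ = (n : ℝ)⁻¹ * ∑ i, (X i).2 * fderiv ℝ f₁ (X i) (0, 1))
    (h8 : aX2d2f₂ = (n : ℝ)⁻¹ * ∑ i, (X i).2 * fderiv ℝ f₂ (X i) (0, 1))
    (h9 : af₁ = (n : ℝ)⁻¹ * ∑ i, f₁ (X i))
    (h10 : af₂ = (n : ℝ)⁻¹ * ∑ i, f₂ (X i))
    -- denominators
    (D₁ D₂ : ℝ)
    (hD₁ : D₁ = aX2f₁ * aX2d1f₂ - aX2d1f₁ * aX2f₂)
    (hD₂ : D₂ = aX2f₁ * af₂ - af₁ * aX2f₂)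
    (hD₁0 : D₁ ≠ 0) (hD₂0 : D₂ ≠ 0)
    -- the Stein estimators
    (muh s2h ah bh : ℝ)
    (hmu : muh = (aX2d1f₂ * aX2X1f₁ - aX2d1f₁ * aX2X1f₂) / D₁)
    (hs2 : s2h = (aX2f₁ * aX2X1f₂ - aX2f₂ * aX2X1f₁) / D₁)
    (ha : ah = (aX2f₂ * aX2d2f₁ - aX2f₁ * aX2d2f₂) / D₂)
    (hb : bh = (af₂ * aX2d2f₁ - af₁ * aX2d2f₂) / D₂)
    (hs20 : s2h ≠ 0) :
    ((n : ℝ)⁻¹ * ∑ i, ((X i).2 * (muh - (X i).1) / s2h * f₁ (X i) +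
        (X i).2 * fderiv ℝ f₁ (X i) (1, 0)) = 0) ∧
    ((n : ℝ)⁻¹ * ∑ i, ((X i).2 * (muh - (X i).1) / s2h * f₂ (X i) +
        (X i).2 * fderiv ℝ f₂ (X i) (1, 0)) = 0) ∧
    ((n : ℝ)⁻¹ * ∑ i, ((ah - bh * (X i).2) * f₁ (X i) +
        (X i).2 * fderiv ℝ f₁ (X i) (0, 1)) = 0) ∧
    ((n : ℝ)⁻¹ * ∑ i, ((ah - bh * (X i).2) * f₂ (X i) +
        (X i).2 * fderiv ℝ f₂ (X i) (0, 1)) = 0) :=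
  stmt13_general n X f₁ f₂ aX2f₁ aX2f₂ aX2d1f₁ aX2d1f₂ aX2X1f₁ aX2X1f₂ aX2d2f₁ aX2d2f₂ af₁ af₂ h1 h2
    h3 h4 h5 h6 h7 h8 h9 h10 D₁ D₂ hD₁ hD₂ hD₁0 hD₂0 muh s2h ah bh hmu hs2 ha hb hs20
end

section
/- Let A = [-1,1]^d ⊂ ℝ^d with d ≥ 2. Then the set Rd(A) of points p ∈ ∂A admitting an open neighborhood V in ℝ^d such that V ∩ A is a d-dimensional smooth submanifold with boundary of ℝ^d equals the set of boundary points of A lying in the open face interiors, i.e., the points x ∈ ∂A for which exactly one coordinate satisfies |x_i| = 1. -/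
open Set Topology Filter
set_option maxHeartbeats 1000000

lemma cube_frontier (d : ℕ) (A : Set (Fin d → ℝ))
    (hA : A = {x : Fin d → ℝ | ∀ i, |x i| ≤ 1}) :
    frontier A = {x : Fin d → ℝ | (∀ i, |x i| ≤ 1) ∧ ∃ i, |x i| = 1} := by
  have hpi : A = Set.pi univ (fun _ : Fin d => Icc (-1:ℝ) 1) := by
    rw [hA]; ext x; simp [abs_le, Set.mem_pi, Pi.le_def, forall_and]
  have hclosed : IsClosed A := by
    rw [hpi]; exact isClosed_set_pi fun i _ => isClosed_Icc
  have hint : interior A = {x : Fin d → ℝ | ∀ i, |x i| < 1} := by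
    rw [hpi, interior_pi_set Set.finite_univ]
    ext x; simp [abs_lt, Set.mem_pi, interior_Icc]
  rw [frontier, hclosed.closure_eq, hint, hA]
  ext x
  simp only [mem_diff, mem_setOf_eq]
  constructor
  · rintro ⟨h1, h2⟩
    refine ⟨h1, ?_⟩
    push_neg at h2
    obtain ⟨i, hi⟩ := h2
    exact ⟨i, le_antisymm (h1 i) hi⟩
  · rintro ⟨h1, i, hi⟩
    exact ⟨h1, fun h => absurd (h i) (by rw [hi]; exact lt_irrefl 1)⟩

lemma cube_closed (d : ℕ) (A : Set (Fin d → ℝ))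
    (hA : A = {x : Fin d → ℝ | ∀ i, |x i| ≤ 1}) : IsClosed A := by
  have hpi : A = Set.pi univ (fun _ : Fin d => Icc (-1:ℝ) 1) := by
    rw [hA]; ext x; simp [abs_le, Set.mem_pi, Pi.le_def, forall_and]
  rw [hpi]; exact isClosed_set_pi fun i _ => isClosed_Icc

/-- For the cube `A = [-1,1]^d` (`d ≥ 2`), the smooth part `Rd(A)` of the boundary —
the boundary points having an open neighbourhood `V` such that `V ∩ A` is a smooth
`d`-dimensional submanifold with boundary (encoded via a local smooth defining function
with nonvanishing gradient) — consists exactly of the boundary points with exactly one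
coordinate of absolute value `1`. -/
theorem stmt18 (d : ℕ) (hd : 2 ≤ d)
    (A : Set (Fin d → ℝ)) (hA : A = {x : Fin d → ℝ | ∀ i, |x i| ≤ 1}) :
    {p ∈ frontier A | ∃ V : Set (Fin d → ℝ), IsOpen V ∧ p ∈ V ∧
        ∃ g : (Fin d → ℝ) → ℝ, ContDiffOn ℝ (⊤ : ℕ∞) g V ∧
          (∀ x ∈ V, fderivWithin ℝ g V x ≠ 0) ∧
          V ∩ A = {x ∈ V | g x ≤ 0}} =
      {x ∈ frontier A | ∃! i, |x i| = 1} := by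
  have hfr := cube_frontier d A hA
  have hclosed := cube_closed d A hA
  ext p
  simp only [mem_setOf_eq]
  constructor
  · rintro ⟨hpF, V, hV, hpV, g, hg, hg', hVA⟩
    refine ⟨hpF, ?_⟩
    have hp1 : (∀ i, |p i| ≤ 1) ∧ ∃ i, |p i| = 1 := by rw [hfr] at hpF; exact hpF
    obtain ⟨i, hi⟩ := hp1.2
    refine ⟨i, hi, ?_⟩
    intro j hj
    by_contra hji
    -- continuity of g on V
    have hgc : ∀ x ∈ V, ContinuousAt g x := fun x hx =>
      (hg.contDiffAt (hV.mem_nhds hx)).continuousAt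
    -- g vanishes on V ∩ frontier A
    have hzero : ∀ x, x ∈ V → x ∈ frontier A → g x = 0 := by
      intro x hxV hxF
      have hxA : x ∈ A := hclosed.frontier_subset hxF
      have hle : g x ≤ 0 := by
        have hx : x ∈ V ∩ A := ⟨hxV, hxA⟩
        rw [hVA] at hx; exact hx.2
      have hge : 0 ≤ g x := by
        have hcl : x ∈ closure Aᶜ := by
          rw [frontier_eq_closure_inter_closure] at hxF; exact hxF.2
        have hne : (𝓝[Aᶜ ∩ V] x).NeBot := by
          rw [nhdsWithin_inter_of_mem' (mem_nhdsWithin_of_mem_nhds (hV.mem_nhds hxV))]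
          exact mem_closure_iff_nhdsWithin_neBot.1 hcl
        have htt : Filter.Tendsto g (𝓝[Aᶜ ∩ V] x) (𝓝 (g x)) :=
          ((hgc x hxV).continuousWithinAt)
        refine ge_of_tendsto htt ?_
        filter_upwards [self_mem_nhdsWithin] with y hy
        by_contra hlt
        push_neg at hlt
        have : y ∈ V ∩ A := by rw [hVA]; exact ⟨hy.2, hlt.le⟩
        exact hy.1 this.2
      linarith
    have hdiff : DifferentiableAt ℝ g p :=
      (hg.contDiffAt (hV.mem_nhds hpV)).differentiableAt (by simp)
    -- key: directional derivatives vanish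
    have key : ∀ k m : Fin d, k ≠ m → |p m| = 1 →
        fderiv ℝ g p (Pi.single k 1) = 0 := by
      intro k m hkm hm
      set c : ℝ := if p k ≤ 0 then 1 else -1 with hc
      have hcne : c ≠ 0 := by rw [hc]; split <;> norm_num
      set v : Fin d → ℝ := Pi.single k c with hv
      have habs := abs_le.1 (hp1.1 k)
      have hmem : ∀ t : ℝ, 0 ≤ t → t ≤ 1 → p + t • v ∈ frontier A := by
        intro t ht0 ht1
        rw [hfr]
        constructor
        · intro l
          by_cases hl : l = k
          · subst hl
            simp only [Pi.add_apply, Pi.smul_apply, hv, Pi.single_eq_same, smul_eq_mul]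
            rw [hc]
            split
            · rename_i h; rw [abs_le]; constructor <;> nlinarith
            · rename_i h; push_neg at h; rw [abs_le]; constructor <;> nlinarith
          · simpa [hv, Pi.single_eq_of_ne hl] using hp1.1 l
        · refine ⟨m, ?_⟩
          simpa [hv, Pi.single_eq_of_ne hkm.symm] using hm
      have hcont : Continuous fun t : ℝ => p + t • v := by continuity
      have hVev : ∀ᶠ t in 𝓝 (0:ℝ), p + t • v ∈ V := by
        have h0 : (fun t : ℝ => p + t • v) 0 ∈ V := by simpa using hpV
        exact hcont.continuousAt.eventually_mem (hV.mem_nhds h0)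
      have hev : (fun t => g (p + t • v)) =ᶠ[𝓝[Ici (0:ℝ)] 0] fun _ => 0 := by
        filter_upwards [hVev.filter_mono nhdsWithin_le_nhds,
          ((isOpen_Iio.eventually_mem (show (0:ℝ) ∈ Iio 1 by norm_num)).filter_mono
            (nhdsWithin_le_nhds : 𝓝[Ici (0:ℝ)] 0 ≤ 𝓝 0)),
          self_mem_nhdsWithin] with t hVt ht1 ht0
        exact hzero _ hVt (hmem t ht0 ht1.le)
      have hψ : HasDerivAt (fun t : ℝ => p + t • v) v 0 := by
        simpa using ((hasDerivAt_id (0:ℝ)).smul_const v).const_add p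
      have h1 : HasDerivAt (fun t : ℝ => g (p + t • v)) (fderiv ℝ g p v) (0:ℝ) := by
        have hgp : HasFDerivAt g (fderiv ℝ g p) ((fun t : ℝ => p + t • v) 0) := by
          simpa using hdiff.hasFDerivAt
        exact hgp.comp_hasDerivAt (0:ℝ) hψ
      have h2 : HasDerivWithinAt (fun t : ℝ => g (p + t • v)) 0 (Ici (0:ℝ)) (0:ℝ) := by
        refine (hasDerivWithinAt_const 0 _ 0).congr_of_eventuallyEq hev ?_
        simpa using hzero p hpV hpF
      have hud : UniqueDiffWithinAt ℝ (Ici (0:ℝ)) 0 := uniqueDiffOn_Ici 0 0 self_mem_Ici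
      have hDv : fderiv ℝ g p v = 0 := by
        rw [← h1.hasDerivWithinAt.derivWithin hud, h2.derivWithin hud]
      have hsingle : v = c • (Pi.single k (1:ℝ) : Fin d → ℝ) := by
        funext l
        by_cases hl : l = k
        · subst hl; simp [hv]
        · simp [hv, Pi.single_eq_of_ne hl]
      rw [hsingle, map_smul, smul_eq_mul] at hDv
      exact (mul_eq_zero.1 hDv).resolve_left hcne
    have hD0 : fderiv ℝ g p = 0 := by
      have hb : ∀ k, fderiv ℝ g p (Pi.single k 1) = 0 := by
        intro k
        rcases eq_or_ne k i with rfl | hk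
        · exact key k j (fun h => hji h.symm) hj
        · exact key k i hk hi
      apply ContinuousLinearMap.coe_injective
      apply Module.Basis.ext (Pi.basisFun ℝ (Fin d))
      intro k
      simpa [Pi.basisFun_apply] using hb k
    exact hg' p hpV (by rw [fderivWithin_of_isOpen hV hpV, hD0])
  · rintro ⟨hpF, i, hi, hiu⟩
    rw [hfr] at hpF
    refine ⟨by rw [hfr]; exact hpF, ?_⟩
    have hpe : p i * p i = 1 := by
      rcases (abs_eq (by norm_num : (0:ℝ) ≤ 1)).1 hi with h | h <;> rw [h] <;> norm_num
    have hpne : p i ≠ 0 := fun h0 => by simp [h0] at hpe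
    refine ⟨{x | -1 < p i * x i ∧ ∀ j, j ≠ i → |x j| < 1}, ?_, ?_,
      (fun x => p i * x i - 1), ?_, ?_, ?_⟩
    · have h1 : IsOpen {x : Fin d → ℝ | -1 < p i * x i} :=
        isOpen_lt continuous_const (continuous_const.mul (continuous_apply i))
      have h2 : IsOpen {x : Fin d → ℝ | ∀ j, j ≠ i → |x j| < 1} := by
        have he : {x : Fin d → ℝ | ∀ j, j ≠ i → |x j| < 1}
            = ⋂ j, {x | j ≠ i → |x j| < 1} := by ext x; simp
        rw [he]
        apply isOpen_iInter_of_finite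
        intro j
        by_cases hj : j = i
        · simp [hj]
        · have he2 : {x : Fin d → ℝ | j ≠ i → |x j| < 1} = {x | |x j| < 1} := by
            ext x; simp [hj]
          rw [he2]
          exact isOpen_lt (continuous_apply j).abs continuous_const
      exact h1.inter h2
    · refine ⟨by rw [hpe]; norm_num, fun j hj => ?_⟩
      exact lt_of_le_of_ne (hpF.1 j) (fun h => hj (hiu j h))
    · exact ((contDiff_const.mul
        ((ContinuousLinearMap.proj i : (Fin d → ℝ) →L[ℝ] ℝ).contDiff)).sub
        contDiff_const).contDiffOn
    · intro x hx
      have hopen : IsOpen {x : Fin d → ℝ | -1 < p i * x i ∧ ∀ j, j ≠ i → |x j| < 1} := by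
        have h1 : IsOpen {x : Fin d → ℝ | -1 < p i * x i} :=
          isOpen_lt continuous_const (continuous_const.mul (continuous_apply i))
        have h2 : IsOpen {x : Fin d → ℝ | ∀ j, j ≠ i → |x j| < 1} := by
          have he : {x : Fin d → ℝ | ∀ j, j ≠ i → |x j| < 1}
              = ⋂ j, {x | j ≠ i → |x j| < 1} := by ext x; simp
          rw [he]
          apply isOpen_iInter_of_finite
          intro j
          by_cases hj : j = i
          · simp [hj]
          · have he2 : {x : Fin d → ℝ | j ≠ i → |x j| < 1} = {x | |x j| < 1} := by
              ext x; simp [hj]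
            rw [he2]
            exact isOpen_lt (continuous_apply j).abs continuous_const
        exact h1.inter h2
      have hfd : HasFDerivAt (fun x : Fin d → ℝ => p i * x i - 1)
          (p i • (ContinuousLinearMap.proj i : (Fin d → ℝ) →L[ℝ] ℝ)) x := by
        simpa using (((ContinuousLinearMap.proj i : (Fin d → ℝ) →L[ℝ] ℝ).hasFDerivAt
          (x := x)).const_smul (p i)).sub_const 1
      rw [fderivWithin_of_isOpen hopen hx, hfd.fderiv]
      intro h
      have h2 := congrArg (fun L : (Fin d → ℝ) →L[ℝ] ℝ => L (Pi.single i 1)) h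
      simp at h2
      exact hpne h2
    · ext x
      simp only [mem_inter_iff, mem_setOf_eq, hA]
      constructor
      · rintro ⟨hxV, hxA⟩
        refine ⟨hxV, ?_⟩
        have hx := abs_le.1 (hxA i)
        rcases (abs_eq (by norm_num : (0:ℝ) ≤ 1)).1 hi with h | h <;> rw [h] <;> linarith
      · rintro ⟨hxV, hgle⟩
        refine ⟨hxV, fun j => ?_⟩
        by_cases hj : j = i
        · subst hj
          have h1 := hxV.1
          rcases (abs_eq (by norm_num : (0:ℝ) ≤ 1)).1 hi with h | h <;>
            rw [h] at h1 hgle <;> rw [abs_le] <;> constructor <;> linarith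
        · exact (hxV.2 j hj).le
end
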